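/- arXiv:1607.04927 — 6 statements merged into one kernel-verified Lean document; each statement's English description precedes it below -/
import Mathlib

section
/- Every real number α ∈ [0, m/r^r) is a jump for type J. -/
open Finset Filter

/-- A generalized directed hypergraph (GDH) of type `K`, where `K` is a subgroup of the
symmetric group on `Fin r`: a set of `r`-tuples of vertices, each with pairwise distinct
entries, closed under the action of `K`. -/
structure GDH (r : ℕ) (K : Subgroup (Equiv.Perm (Fin r))) (V : Type) [DecidableEq V] where
  E : Finset (Fin r → V)
  inj : ∀ a ∈ E, Function.Injective a
  closed : ∀ a ∈ E, ∀ π ∈ K, (fun i => a (π i)) ∈ E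

namespace GDH

variable {r : ℕ} {K K' : Subgroup (Equiv.Perm (Fin r))} {V W : Type} [DecidableEq V]
  [DecidableEq W]

/-- The number of edges `e(G) = |E|/m`, where an edge is a `K`-orbit contained in `E`. -/
noncomputable def edgeCount (G : GDH r K V) : ℝ := (G.E.card : ℝ) / (Nat.card K)

/-- The normalizing factor `(r!/m) * C(n,r)`. -/
noncomputable def denom (r : ℕ) (K : Subgroup (Equiv.Perm (Fin r))) (n : ℕ) : ℝ :=
  ((r.factorial : ℝ) / (Nat.card K)) * (n.choose r)

/-- The edge density `d(G) = e(G) / ((r!/m) * C(n,r))`. -/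
noncomputable def density [Fintype V] (G : GDH r K V) : ℝ :=
  G.edgeCount / denom r K (Fintype.card V)

/-- `G` contains a copy of `H`: there is an injective homomorphism from `H` to `G`. -/
def ContainsCopy (G : GDH r K V) (H : GDH r K W) : Prop :=
  ∃ f : W → V, Function.Injective f ∧ ∀ a ∈ H.E, (fun i => f (a i)) ∈ G.E

/-- `G` is `𝓕`-free: it contains no copy of any member of the family `𝓕`. -/
def Free (G : GDH r K V) (𝓕 : Set ((k : ℕ) × GDH r K (Fin k))) : Prop :=
  ∀ F ∈ 𝓕, ¬ G.ContainsCopy F.2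

/-- The extremal number `ex(n, 𝓕)`: the maximum of `e(G)` over `𝓕`-free GDHs on `n` vertices. -/
noncomputable def exNum (r : ℕ) (K : Subgroup (Equiv.Perm (Fin r))) (n : ℕ)
    (𝓕 : Set ((k : ℕ) × GDH r K (Fin k))) : ℝ :=
  sSup {x : ℝ | ∃ G : GDH r K (Fin n), G.Free 𝓕 ∧ x = G.edgeCount}

/-- The sequence of extremal edge densities `ex(n,𝓕) / ((r!/m) C(n,r))`. -/
noncomputable def densitySeq (r : ℕ) (K : Subgroup (Equiv.Perm (Fin r)))
    (𝓕 : Set ((k : ℕ) × GDH r K (Fin k))) (n : ℕ) : ℝ :=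
  exNum r K n 𝓕 / denom r K n

/-- `x` is the Turán density of `𝓕`. -/
def IsTuranDensity (r : ℕ) (K : Subgroup (Equiv.Perm (Fin r)))
    (𝓕 : Set ((k : ℕ) × GDH r K (Fin k))) (x : ℝ) : Prop :=
  Tendsto (densitySeq r K 𝓕) atTop (nhds x)

/-- The sub-GDH of `G` induced on the image of an injective vertex map `f`. -/
def induce [Fintype W] (G : GDH r K V) (f : W → V) (hf : Function.Injective f) :
    GDH r K W where
  E := Finset.univ.filter (fun a : Fin r → W => (fun i => f (a i)) ∈ G.E)
  inj := by
    intro a ha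
    rw [Finset.mem_filter] at ha
    exact fun i j hij => G.inj _ ha.2 (congrArg f hij)
  closed := by
    intro a ha π hπ
    rw [Finset.mem_filter] at ha ⊢
    exact ⟨Finset.mem_univ _, G.closed _ ha.2 π hπ⟩

/-- `α` is a jump for type `K`. -/
def IsJump (r : ℕ) (K : Subgroup (Equiv.Perm (Fin r))) (α : ℝ) : Prop :=
  ∃ c > (0 : ℝ), ∀ ε > (0 : ℝ), ∀ l : ℕ, 0 < l → ∃ n₀ : ℕ, ∀ n, n₀ ≤ n →
    ∀ G : GDH r K (Fin n), (α + ε) * denom r K n ≤ G.edgeCount →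
      ∃ f : Fin l → Fin n, ∃ hf : Function.Injective f,
        (α + c) * denom r K l ≤ (G.induce f hf).edgeCount

/-- The `t`-blowup of `G`: each vertex `v` is replaced by `t v` copies. -/
def blowup [Fintype V] (G : GDH r K V) (t : V → ℕ) : GDH r K ((v : V) × Fin (t v)) where
  E := Finset.univ.filter
    (fun a : Fin r → ((v : V) × Fin (t v)) => (fun i => (a i).1) ∈ G.E)
  inj := by
    intro a ha
    rw [Finset.mem_filter] at ha
    exact fun i j hij => G.inj _ ha.2 (congrArg Sigma.fst hij)
  closed := by
    intro a ha π hπ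
    rw [Finset.mem_filter] at ha ⊢
    exact ⟨Finset.mem_univ _, G.closed _ ha.2 π hπ⟩

/-- Relabel the vertices of a GDH along a bijection. -/
def relabel (G : GDH r K V) (e : V ≃ W) : GDH r K W where
  E := G.E.image (fun a => fun i => e (a i))
  inj := by
    intro b hb
    rw [Finset.mem_image] at hb
    obtain ⟨a, ha, rfl⟩ := hb
    exact fun i j hij => G.inj a ha (e.injective hij)
  closed := by
    intro b hb π hπ
    rw [Finset.mem_image] at hb ⊢
    obtain ⟨a, ha, rfl⟩ := hb
    exact ⟨fun i => a (π i), G.closed a ha π hπ, rfl⟩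

/-- A GDH on an abstract finite vertex type, viewed as a GDH on `Fin n`. -/
noncomputable def toFin [Fintype V] (G : GDH r K V) : (n : ℕ) × GDH r K (Fin n) :=
  ⟨Fintype.card V, G.relabel (Fintype.equivFin V)⟩

/-- The edge polynomial `p_G(x) = Σ_R e_R Π_{i∈R} x_i = (1/m) Σ_{a∈E} Π_i x_{a i}`. -/
noncomputable def edgePoly (G : GDH r K V) (x : V → ℝ) : ℝ :=
  (∑ a ∈ G.E, ∏ i, x (a i)) / (Nat.card K)

/-- The blowup density `b(G) = m * max {p_G(x) : x in the standard simplex}`. -/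
noncomputable def blowupDensity [Fintype V] (G : GDH r K V) : ℝ :=
  (Nat.card K : ℝ) * sSup (G.edgePoly '' stdSimplex ℝ V)

open scoped Classical in
/-- The single-edge GDH of type `K` on `r` vertices: its tuple set is exactly the
`K`-orbit of the identity tuple. -/
noncomputable def singleEdge (r : ℕ) (K : Subgroup (Equiv.Perm (Fin r))) :
    GDH r K (Fin r) where
  E := Finset.univ.filter (fun a : Fin r → Fin r => ∃ π ∈ K, a = ⇑π)
  inj := by
    intro a ha
    rw [Finset.mem_filter] at ha
    obtain ⟨π, hπ, rfl⟩ := ha.2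
    exact π.injective
  closed := by
    intro a ha σ hσ
    rw [Finset.mem_filter] at ha ⊢
    obtain ⟨π, hπ, rfl⟩ := ha.2
    refine ⟨Finset.mem_univ _, π * σ, mul_mem hπ hσ, ?_⟩
    ext i
    simp [Equiv.Perm.mul_apply]

/-- The `K`-orbit of a tuple `a` (an edge, viewed as a set of tuples). -/
def orbitSet (K : Subgroup (Equiv.Perm (Fin r))) (a : Fin r → V) : Set (Fin r → V) :=
  {b | ∃ π ∈ K, b = fun i => a (π i)}

/-- A GDH `F` of type `K` contains a GDH `F'` of type `K'` on the same vertex set: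
every edge (`K'`-orbit) of `F'` is contained in some edge (`K`-orbit) of `F`. -/
def Contains (F : GDH r K V) (F' : GDH r K' V) : Prop :=
  ∀ a ∈ F'.E, ∃ b ∈ F.E, orbitSet K' a ⊆ orbitSet K b

/-- `F` is the minimum `K`-container of `F'`: it contains `F'` and every edge of `F`
contains at least one edge of `F'`. -/
def IsMinContainer (F : GDH r K V) (F' : GDH r K' V) : Prop :=
  F.Contains F' ∧ ∀ b ∈ F.E, ∃ a ∈ F'.E, orbitSet K' a ⊆ orbitSet K b

/-- The number of edges of `F'` contained in the edge of type `K` represented by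
the tuple `b`. -/
noncomputable def edgesWithin (F' : GDH r K' V) (K : Subgroup (Equiv.Perm (Fin r)))
    (b : Fin r → V) : ℕ :=
  {O : Set (Fin r → V) | (∃ a ∈ F'.E, O = orbitSet K' a) ∧ O ⊆ orbitSet K b}.ncard

/-- `α` is a demonstrated nonjump for type `K`. -/
def IsDemoNonjump (r : ℕ) (K : Subgroup (Equiv.Perm (Fin r))) (α : ℝ) : Prop :=
  ∃ G : ℕ → (k : ℕ) × GDH r K (Fin k),
    (∀ n, α < blowupDensity (G n).2) ∧
    ∀ l : ℕ, 0 < l → ∃ n₀ : ℕ, ∀ n, n₀ ≤ n → ∀ s : ℕ, s ≤ l →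
      ∀ f : Fin s → Fin (G n).1, ∀ hf : Function.Injective f,
        blowupDensity ((G n).2.induce f hf) ≤ α

end GDH
section AuxBox
open Finset


-- degree sum lemma
lemma sumd {r n : ℕ} (E : Finset (Fin (r+1) → Fin n)) :
    ∑ a : Fin r → Fin n, (univ.filter fun v => Fin.snoc a v ∈ E).card = E.card := by
  rw [Finset.card_eq_sum_card_fiberwise (f := fun b => Fin.init b) (t := univ) (fun x _ => mem_univ _)]
  refine Finset.sum_congr rfl fun a _ => ?_
  refine Finset.card_bij' (fun v _ => Fin.snoc a v) (fun b _ => b (Fin.last r)) ?_ ?_ ?_ ?_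
  · intro v hv
    simp only [mem_filter, mem_univ, true_and] at hv ⊢
    exact ⟨hv, Fin.init_snoc ..⟩
  · intro b hb
    simp only [mem_filter, mem_univ, true_and] at hb ⊢
    obtain ⟨hb1, hb2⟩ := hb
    rw [← hb2, Fin.snoc_init_self]
    exact hb1
  · intro v _; exact Fin.snoc_last ..
  · intro b hb
    simp only [mem_filter] at hb
    rw [← hb.2]
    exact Fin.snoc_init_self b

-- double counting over t-sets
lemma sumT {r n : ℕ} (t : ℕ) (E : Finset (Fin (r+1) → Fin n)) :
    ∑ T ∈ powersetCard t (univ : Finset (Fin n)),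
      (univ.filter fun a : Fin r → Fin n => ∀ v ∈ T, Fin.snoc a v ∈ E).card
    = ∑ a : Fin r → Fin n,
        ((univ.filter fun v => Fin.snoc a v ∈ E).card).choose t := by
  simp only [Finset.card_filter]
  rw [Finset.sum_comm]
  refine Finset.sum_congr rfl fun a _ => ?_
  simp only [← Finset.card_filter]
  rw [← Finset.card_powersetCard]
  congr 1
  ext T
  simp only [mem_filter, Finset.mem_powersetCard, subset_univ, true_and, Finset.subset_iff,
    mem_filter, mem_univ, and_comm]
  tauto

lemma boxlemma (t : ℕ) : ∀ r : ℕ, ∀ k : ℕ, 0 < k → ∃ n₀ : ℕ, 0 < n₀ ∧ ∀ n, n₀ ≤ n →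
    ∀ E : Finset (Fin r → Fin n), n ^ r ≤ k * E.card →
    ∃ S : Fin r → Finset (Fin n), (∀ i, t ≤ (S i).card) ∧
      ∀ a : Fin r → Fin n, (∀ i, a i ∈ S i) → a ∈ E := by
  intro r
  induction r with
  | zero =>
    intro k hk
    refine ⟨1, one_pos, fun n hn E hE => ?_⟩
    have hEne : E.Nonempty := by
      rw [← Finset.card_pos]
      by_contra h
      push_neg at h
      interval_cases h' : E.card
      · simp [h'] at hE
    obtain ⟨a, ha⟩ := hEne
    refine ⟨fun i => i.elim0, fun i => i.elim0, fun b _ => ?_⟩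
    have : b = a := funext fun i => i.elim0
    rwa [this]
  | succ r ih =>
    intro k hk
    set k' : ℕ := 2 * k * t.factorial * (8 * k) ^ t with hk'def
    have hk'pos : 0 < k' := by positivity
    obtain ⟨n₀', hn₀'pos, hih⟩ := ih k' hk'pos
    refine ⟨n₀' + 4 * k * (t + 1) + t + 1, by positivity, fun n hn E hE => ?_⟩
    have hnpos : 0 < n := by omega
    set d : (Fin r → Fin n) → ℕ := fun a => (univ.filter fun v => Fin.snoc a v ∈ E).card with hd
    set q : ℕ := n / (2 * k) with hq
    set p : ℕ := n / (4 * k) with hp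
    have hpq : p = q / 2 := by rw [hp, hq, Nat.div_div_eq_div_mul]; ring_nf
    have haux1 : 2 * t * (2 * k) ≤ 4 * k * (t + 1) := by nlinarith
    have haux2 : 1 * (4 * k) ≤ 4 * k * (t + 1) := by nlinarith
    have hq2t : 2 * t ≤ q := by
      rw [hq, Nat.le_div_iff_mul_le (by positivity)]
      omega
    have hp1 : 1 ≤ p := by
      rw [hp, Nat.le_div_iff_mul_le (by positivity)]
      omega
    have hpqt : p + t ≤ q + 1 := by omega
    have hn8kp : n ≤ 8 * k * p := by
      have h1 : 4 * k * p + n % (4 * k) = n := by rw [hp]; exact Nat.div_add_mod n (4 * k)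
      have h2 : n % (4 * k) < 4 * k := Nat.mod_lt _ (by positivity)
      nlinarith [hp1, h2, h1]
    -- heavy set
    set H : Finset (Fin r → Fin n) := univ.filter (fun a => n ≤ 2 * k * d a) with hH
    have hHcard : n ^ r ≤ 2 * k * H.card := by
      have hsum : ∑ a : Fin r → Fin n, d a = E.card := sumd E
      have hlight : ∀ a ∈ (univ : Finset (Fin r → Fin n)) \ H, 2 * k * d a ≤ n := by
        intro a ha
        simp only [hH, Finset.mem_sdiff, mem_filter, mem_univ, true_and, not_le] at ha
        omega
      have h1 : ∑ a ∈ (univ : Finset (Fin r → Fin n)) \ H, 2 * k * d a ≤ n ^ r * n := by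
        calc ∑ a ∈ (univ : Finset (Fin r → Fin n)) \ H, 2 * k * d a
            ≤ ∑ _a ∈ (univ : Finset (Fin r → Fin n)) \ H, n := Finset.sum_le_sum hlight
          _ = ((univ : Finset (Fin r → Fin n)) \ H).card * n := by rw [Finset.sum_const, smul_eq_mul]
          _ ≤ n ^ r * n := by
              have := Finset.card_le_univ ((univ : Finset (Fin r → Fin n)) \ H)
              have hcu : Fintype.card (Fin r → Fin n) = n ^ r := by simp [Fintype.card_fun]
              exact Nat.mul_le_mul_right n (by omega)
      have h2 : ∑ a ∈ H, 2 * k * d a ≤ H.card * (2 * k * n) := by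
        refine (Finset.sum_le_sum fun a _ => ?_).trans_eq (by rw [Finset.sum_const, smul_eq_mul])
        have : d a ≤ n := by
          rw [hd]
          simpa using (Finset.card_filter_le (univ : Finset (Fin n)) _).trans (by simp)
        exact Nat.mul_le_mul_left _ this
      have hsplit : ∑ a : Fin r → Fin n, 2 * k * d a
          = ∑ a ∈ H, 2 * k * d a + ∑ a ∈ (univ : Finset (Fin r → Fin n)) \ H, 2 * k * d a := by
        rw [← Finset.sum_sdiff (Finset.subset_univ H)]; ring
      have hE2 : n ^ r * n ≤ k * E.card := by rw [← pow_succ]; exact hE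
      have hmain : 2 * k * E.card = ∑ a : Fin r → Fin n, 2 * k * d a := by
        rw [← Finset.mul_sum, hsum]
      have hkey : n ^ r * n ≤ (2 * k * H.card) * n := by nlinarith [h1, h2, hsplit, hmain, hE2]
      exact Nat.le_of_mul_le_mul_right hkey hnpos
    -- pigeonhole over t-sets T
    have hqd : ∀ a ∈ H, q ≤ d a := by
      intro a ha
      simp only [hH, mem_filter, mem_univ, true_and] at ha
      calc q = n / (2 * k) := hq
        _ ≤ (2 * k * d a) / (2 * k) := Nat.div_le_div_right ha
        _ = d a := Nat.mul_div_cancel_left _ (by positivity)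
    have hsum2 : H.card * q.choose t ≤ ∑ T ∈ powersetCard t (univ : Finset (Fin n)),
        (univ.filter fun a : Fin r → Fin n => ∀ v ∈ T, Fin.snoc a v ∈ E).card := by
      rw [sumT]
      calc H.card * q.choose t = ∑ _a ∈ H, q.choose t := by rw [Finset.sum_const, smul_eq_mul]
        _ ≤ ∑ a ∈ H, (d a).choose t :=
            Finset.sum_le_sum fun a ha => Nat.choose_le_choose t (hqd a ha)
        _ ≤ ∑ a : Fin r → Fin n, (d a).choose t :=
            Finset.sum_le_sum_of_subset (Finset.subset_univ H)
    have htn : t ≤ n := by omega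
    have hTne : (powersetCard t (univ : Finset (Fin n))).Nonempty := by
      rw [Finset.powersetCard_nonempty]; simpa using htn
    have hmax := Finset.exists_max_image (powersetCard t (univ : Finset (Fin n)))
      (fun T => (univ.filter fun a : Fin r → Fin n => ∀ v ∈ T, Fin.snoc a v ∈ E).card) hTne
    obtain ⟨T, hT, hTmax⟩ := hmax
    set ET : Finset (Fin r → Fin n) :=
      univ.filter (fun a : Fin r → Fin n => ∀ v ∈ T, Fin.snoc a v ∈ E) with hET
    have hTcard : T.card = t := (Finset.mem_powersetCard.mp hT).2
    have hsum3 : ∑ T' ∈ powersetCard t (univ : Finset (Fin n)),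
        (univ.filter fun a : Fin r → Fin n => ∀ v ∈ T', Fin.snoc a v ∈ E).card
        ≤ (powersetCard t (univ : Finset (Fin n))).card * ET.card :=
      Finset.sum_le_card_nsmul _ _ _ (fun T' hT' => hTmax T' hT')
    have hcardP : (powersetCard t (univ : Finset (Fin n))).card = n.choose t := by
      rw [Finset.card_powersetCard, Finset.card_univ, Fintype.card_fin]
    have hB : H.card * q.choose t ≤ n.choose t * ET.card := by
      calc H.card * q.choose t ≤ _ := hsum2
        _ ≤ (powersetCard t (univ : Finset (Fin n))).card * ET.card := hsum3
        _ = n.choose t * ET.card := by rw [hcardP]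
    have hC : p ^ t ≤ (q + 1 - t) ^ t := Nat.pow_le_pow_left (by omega) t
    have hD : (q + 1 - t) ^ t ≤ t.factorial * q.choose t := by
      calc (q + 1 - t) ^ t ≤ q.descFactorial t := Nat.pow_sub_le_descFactorial q t
        _ = t.factorial * q.choose t := Nat.descFactorial_eq_factorial_mul_choose q t
    have hEbnd : n.choose t ≤ n ^ t := Nat.choose_le_pow n t
    have hF : n ^ t ≤ (8 * k) ^ t * p ^ t := by
      calc n ^ t ≤ (8 * k * p) ^ t := Nat.pow_le_pow_left hn8kp t
        _ = (8 * k) ^ t * p ^ t := mul_pow _ _ _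
    have hchain : n ^ r * n ^ t ≤ (k' * ET.card) * n ^ t := by
      calc n ^ r * n ^ t
          ≤ (2 * k * H.card) * ((8 * k) ^ t * p ^ t) := Nat.mul_le_mul hHcard hF
        _ ≤ (2 * k * H.card) * ((8 * k) ^ t * (t.factorial * q.choose t)) :=
            Nat.mul_le_mul_left _ (Nat.mul_le_mul_left _ (hC.trans hD))
        _ = (2 * k * t.factorial * (8 * k) ^ t) * (H.card * q.choose t) := by ring
        _ ≤ (2 * k * t.factorial * (8 * k) ^ t) * (n.choose t * ET.card) :=
            Nat.mul_le_mul_left _ hB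
        _ ≤ (2 * k * t.factorial * (8 * k) ^ t) * (n ^ t * ET.card) :=
            Nat.mul_le_mul_left _ (Nat.mul_le_mul_right _ hEbnd)
        _ = (k' * ET.card) * n ^ t := by rw [hk'def]; ring
    have hETbnd : n ^ r ≤ k' * ET.card :=
      Nat.le_of_mul_le_mul_right hchain (by positivity)
    obtain ⟨S, hS1, hS2⟩ := hih n (by omega) ET hETbnd
    refine ⟨Fin.snoc S T, ?_, ?_⟩
    · intro i
      refine Fin.lastCases ?_ ?_ i
      · rw [Fin.snoc_last, hTcard]
      · intro j
        rw [Fin.snoc_castSucc]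
        exact hS1 j
    · intro a ha
      have h1 : Fin.init a ∈ ET := by
        refine hS2 _ fun i => ?_
        have := ha (Fin.castSucc i)
        rwa [Fin.snoc_castSucc] at this
      have h2 : a (Fin.last r) ∈ T := by
        have := ha (Fin.last r)
        rwa [Fin.snoc_last] at this
      rw [hET, mem_filter] at h1
      have := h1.2 _ h2
      rwa [Fin.snoc_init_self] at this

lemma tpart_sum (l r : ℕ) (hr : 0 < r) :
    ∑ i ∈ range r, (if i < l % r then l / r + 1 else l / r) = l := by
  have hs : l % r < r := Nat.mod_lt _ hr
  have h1 : ∀ i, (if i < l % r then l / r + 1 else l / r) = l / r + (if i < l % r then 1 else 0) := by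
    intro i; split_ifs <;> omega
  rw [Finset.sum_congr rfl fun i _ => h1 i, Finset.sum_add_distrib, Finset.sum_const,
    ← Finset.card_filter]
  have h2 : (range r).filter (fun i => i < l % r) = range (l % r) := by
    ext x; simp only [Finset.mem_filter, Finset.mem_range]; omega
  rw [h2]
  simp only [Finset.card_range, smul_eq_mul]
  have := Nat.div_add_mod l r
  omega

lemma balanced (l r : ℕ) (hr : 0 < r) :
    l.descFactorial r ≤ ∏ i ∈ range r, (r * (if i < l % r then l / r + 1 else l / r)) := by
  rw [Nat.descFactorial_eq_prod_range]
  refine Finset.prod_le_prod' fun i hi => ?_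
  have hdm := Nat.div_add_mod l r
  have hs : l % r < r := Nat.mod_lt _ hr
  split_ifs with h
  · have : r * (l / r + 1) = r * (l / r) + r := by ring
    omega
  · push_neg at h
    omega

open Fintype in
lemma orbit_count {r l : ℕ} (J : Subgroup (Equiv.Perm (Fin r))) (B : Fin r → Finset (Fin l))
    (hdisj : ∀ i j, i ≠ j → Disjoint (B i) (B j)) (F : Finset (Fin r → Fin l))
    (hsub : ∀ π : Equiv.Perm (Fin r), π ∈ J → ∀ a : Fin r → Fin l,
      (∀ i, a i ∈ B (π i)) → a ∈ F) :
    Nat.card J * ∏ i, (B i).card ≤ F.card := by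
  classical
  set P : Finset (Equiv.Perm (Fin r)) := univ.filter (· ∈ J) with hP
  have hPcard : P.card = Nat.card J := by
    rw [Nat.card_eq_fintype_card, Fintype.card_subtype]
  set D : Finset (Fin r → Fin l) := P.biUnion (fun π => Fintype.piFinset (fun i => B (π i)))
    with hD
  have hDsub : D ⊆ F := by
    intro a ha
    rw [hD, Finset.mem_biUnion] at ha
    obtain ⟨π, hπ, haπ⟩ := ha
    rw [Fintype.mem_piFinset] at haπ
    exact hsub π (by simpa [hP] using hπ) a haπ
  have hDcard : D.card = Nat.card J * ∏ i, (B i).card := by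
    rw [hD, Finset.card_biUnion]
    · rw [← hPcard]
      have h1 : ∀ π ∈ P, (Fintype.piFinset fun i => B (π i)).card = ∏ i, (B i).card := by
        intro π _
        rw [Fintype.card_piFinset]
        exact Equiv.prod_comp π (fun i => (B i).card)
      rw [Finset.sum_congr rfl h1, Finset.sum_const, smul_eq_mul]
    · intro π hπ σ hσ hne
      show Disjoint _ _
      rw [Finset.disjoint_left]
      intro a haπ haσ
      rw [Fintype.mem_piFinset] at haπ haσ
      refine hne (Equiv.ext fun i => ?_)
      by_contra hii
      exact Finset.disjoint_left.mp (hdisj _ _ hii) (haπ i) (haσ i)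
  calc Nat.card J * ∏ i, (B i).card = D.card := hDcard.symm
    _ ≤ F.card := Finset.card_le_card hDsub

lemma denomval (r l : ℕ) (J : Subgroup (Equiv.Perm (Fin r)))
    (hm : (0:ℝ) < (Nat.card J : ℝ)) :
    ((Nat.card J : ℝ) / (r:ℝ)^r) * GDH.denom r J l
      = ((l.descFactorial r : ℕ) : ℝ) / (r:ℝ)^r := by
  have hcast : ((l.descFactorial r : ℕ) : ℝ) = (r.factorial : ℝ) * (l.choose r : ℝ) := by
    exact_mod_cast congrArg Nat.cast (Nat.descFactorial_eq_factorial_mul_choose l r)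
  unfold GDH.denom
  rw [hcast]
  field_simp

end AuxBox

/-- Every real `α ∈ [0, m/r^r)` is a jump for type `J`. -/
theorem stmt7 (r : ℕ) (hr : 1 ≤ r) (J : Subgroup (Equiv.Perm (Fin r)))
    (α : ℝ) (h0 : 0 ≤ α) (h1 : α < (Nat.card J : ℝ) / (r : ℝ) ^ r) :
    GDH.IsJump r J α := by
  classical
  have hrpos : 0 < r := hr
  have hmnat : 0 < Nat.card J := Nat.card_pos
  have hm : (0:ℝ) < (Nat.card J : ℝ) := by exact_mod_cast hmnat
  have hrr : (0:ℝ) < (r:ℝ)^r := by positivity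
  set β : ℝ := (Nat.card J : ℝ) / (r:ℝ)^r with hβdef
  have hβ : 0 < β := by positivity
  refine ⟨(β - α)/2, by linarith, ?_⟩
  intro ε hε l hl
  by_cases hlr : l < r
  · -- trivial case: denom at l is zero
    refine ⟨l, fun n hn G hG => ?_⟩
    refine ⟨Fin.castLE hn, Fin.castLE_injective hn, ?_⟩
    have hdenom : GDH.denom r J l = 0 := by
      unfold GDH.denom
      rw [Nat.choose_eq_zero_of_lt hlr]
      simp
    rw [hdenom, mul_zero]
    unfold GDH.edgeCount
    positivity
  · push_neg at hlr
    set k : ℕ := ⌈(2:ℝ)^r / ε⌉₊ + 1 with hkdef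
    have hk : 0 < k := Nat.succ_pos _
    obtain ⟨n₁, hn₁pos, hbox⟩ := boxlemma l r k hk
    refine ⟨n₁ + 2*r, fun n hn G hG => ?_⟩
    have h2r : 2*r ≤ n := by omega
    have hrn : r ≤ n := by omega
    -- Step 1: many tuples
    have hEcard : n ^ r ≤ k * G.E.card := by
      have hG' : (α + ε) * (((r.factorial : ℝ) / (Nat.card J : ℝ)) * (n.choose r : ℝ))
          ≤ (G.E.card : ℝ) / (Nat.card J : ℝ) := hG
      have hmE : (α + ε) * ((r.factorial : ℝ) * (n.choose r : ℝ)) ≤ (G.E.card : ℝ) := by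
        have := mul_le_mul_of_nonneg_right hG' (le_of_lt hm)
        rw [div_mul_cancel₀ _ (ne_of_gt hm)] at this
        calc (α + ε) * ((r.factorial : ℝ) * (n.choose r : ℝ))
            = (α + ε) * ((r.factorial : ℝ) / (Nat.card J : ℝ) * (n.choose r : ℝ))
              * (Nat.card J : ℝ) := by field_simp
          _ ≤ (G.E.card : ℝ) := this
      have hdesc : ((n.descFactorial r : ℝ)) = (r.factorial : ℝ) * (n.choose r : ℝ) := by
        exact_mod_cast congrArg Nat.cast (Nat.descFactorial_eq_factorial_mul_choose n r)
      have hεE : ε * (n.descFactorial r : ℝ) ≤ (G.E.card : ℝ) := by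
        rw [hdesc]
        refine le_trans ?_ hmE
        have hfc : (0:ℝ) ≤ (r.factorial : ℝ) * (n.choose r : ℝ) := by positivity
        nlinarith
      have hnatpow : n ^ r ≤ 2 ^ r * n.descFactorial r := by
        calc n ^ r ≤ (2 * (n + 1 - r)) ^ r := Nat.pow_le_pow_left (by omega) r
          _ = 2 ^ r * (n + 1 - r) ^ r := mul_pow 2 _ r
          _ ≤ 2 ^ r * n.descFactorial r :=
              Nat.mul_le_mul_left _ (Nat.pow_sub_le_descFactorial n r)
      have hkge : (2:ℝ)^r / ε ≤ (k : ℝ) := by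
        rw [hkdef]
        push_cast
        calc (2:ℝ)^r / ε ≤ (⌈(2:ℝ)^r / ε⌉₊ : ℝ) := Nat.le_ceil _
          _ ≤ (⌈(2:ℝ)^r / ε⌉₊ : ℝ) + 1 := by linarith
      have hreal : ((n ^ r : ℕ) : ℝ) ≤ (k : ℝ) * (G.E.card : ℝ) := by
        have h1 : ((n ^ r : ℕ) : ℝ) ≤ (2:ℝ)^r * (n.descFactorial r : ℝ) := by
          exact_mod_cast hnatpow
        have h2 : (2:ℝ)^r * (n.descFactorial r : ℝ)
            = ((2:ℝ)^r / ε) * (ε * (n.descFactorial r : ℝ)) := by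
          field_simp
        have h3 : (0:ℝ) ≤ ε * (n.descFactorial r : ℝ) := by positivity
        have h4 : ((2:ℝ)^r / ε) * (ε * (n.descFactorial r : ℝ)) ≤ (k:ℝ) * (G.E.card : ℝ) := by
          have h5 : (0:ℝ) < (2:ℝ)^r / ε := by positivity
          have h6 : (0:ℝ) ≤ (2:ℝ)^r / ε := le_of_lt h5
          calc ((2:ℝ)^r / ε) * (ε * (n.descFactorial r : ℝ))
              ≤ ((2:ℝ)^r / ε) * (G.E.card : ℝ) := by
                exact mul_le_mul_of_nonneg_left hεE h6
            _ ≤ (k:ℝ) * (G.E.card : ℝ) := by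
                exact mul_le_mul_of_nonneg_right hkge (by positivity)
        linarith
      exact_mod_cast hreal
    -- Step 2: get the box
    obtain ⟨S, hS1, hS2⟩ := hbox n (by omega) G.E hEcard
    have hSne : ∀ i, (S i).Nonempty := fun i =>
      Finset.card_pos.mp (lt_of_lt_of_le hl (hS1 i))
    -- Step 3: the parts are pairwise disjoint
    have hdisjS : ∀ i j, i ≠ j → Disjoint (S i) (S j) := by
      intro i j hij
      rw [Finset.disjoint_left]
      intro v hvi hvj
      set a : Fin r → Fin n := fun x => if x = i ∨ x = j then v else (hSne x).choose with ha
      have haS : ∀ x, a x ∈ S x := by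
        intro x
        simp only [ha]
        by_cases hx : x = i ∨ x = j
        · rw [if_pos hx]
          rcases hx with h | h <;> rw [h] <;> assumption
        · rw [if_neg hx]
          exact (hSne x).choose_spec
      have haE := hS2 a haS
      have hij2 : a i = a j := by
        simp only [ha]
        simp
      exact hij (G.inj a haE hij2)
    -- Step 4: balanced part sizes
    set ti : Fin r → ℕ := fun i => if (i : ℕ) < l % r then l / r + 1 else l / r with hti
    have hdm := Nat.div_add_mod l r
    have hq1 : 1 ≤ l / r := (Nat.one_le_div_iff hrpos).mpr hlr
    have hqr : l / r ≤ r * (l / r) := Nat.le_mul_of_pos_left _ hrpos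
    have hti_le : ∀ i, ti i ≤ l := by
      intro i
      simp only [hti]
      split_ifs with h <;> omega
    have hti_pos : ∀ i, 1 ≤ ti i := by
      intro i
      simp only [hti]
      split_ifs with h <;> omega
    have hchoice : ∀ i : Fin r, ∃ A ⊆ S i, A.card = ti i := by
      intro i
      exact Finset.exists_subset_card_eq ((hti_le i).trans (hS1 i))
    choose A hAsub hAcard using hchoice
    have hdisjA : ∀ i j, i ≠ j → Disjoint (A i) (A j) := fun i j hij =>
      Finset.disjoint_of_subset_left (hAsub i)
        (Finset.disjoint_of_subset_right (hAsub j) (hdisjS i j hij))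
    -- Step 5: the union has exactly l elements
    set U : Finset (Fin n) := Finset.univ.biUnion A with hU
    have hUcard : U.card = l := by
      rw [hU, Finset.card_biUnion (fun i _ j _ hij => hdisjA i j hij)]
      have h1 : ∀ i ∈ (Finset.univ : Finset (Fin r)), (A i).card = ti i := fun i _ => hAcard i
      rw [Finset.sum_congr rfl h1]
      simp only [hti]
      rw [Fin.sum_univ_eq_sum_range (fun j => if j < l % r then l / r + 1 else l / r) r]
      exact tpart_sum l r hrpos
    have hAU : ∀ i, A i ⊆ U := fun i => by
      intro x hx
      rw [hU, Finset.mem_biUnion]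
      exact ⟨i, Finset.mem_univ i, hx⟩
    -- Step 6: build the injection
    set e : Fin l ≃ {x // x ∈ U} := (finCongr hUcard.symm).trans U.equivFin.symm with he
    set f : Fin l → Fin n := fun x => (e x : Fin n) with hf
    have hfinj : Function.Injective f := by
      intro x y hxy
      have : e x = e y := Subtype.ext hxy
      exact e.injective this
    set B : Fin r → Finset (Fin l) := fun i => Finset.univ.filter (fun x => f x ∈ A i) with hB
    have hBdisj : ∀ i j, i ≠ j → Disjoint (B i) (B j) := by
      intro i j hij
      rw [Finset.disjoint_left]
      intro x hxi hxj
      rw [hB, Finset.mem_filter] at hxi hxj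
      exact Finset.disjoint_left.mp (hdisjA i j hij) hxi.2 hxj.2
    have hBcard : ∀ i, (B i).card = ti i := by
      intro i
      rw [← hAcard i]
      refine Finset.card_bij (fun x _ => f x) ?_ ?_ ?_
      · intro x hx
        rw [hB, Finset.mem_filter] at hx
        exact hx.2
      · intro x _ y _ hxy
        exact hfinj hxy
      · intro b hb
        refine ⟨e.symm ⟨b, hAU i hb⟩, ?_, ?_⟩
        · rw [hB, Finset.mem_filter]
          refine ⟨Finset.mem_univ _, ?_⟩
          simp only [hf, Equiv.apply_symm_apply]
          exact hb
        · simp only [hf, Equiv.apply_symm_apply]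
    -- Step 7: count edges of the induced sub-GDH
    have hcount : Nat.card J * ∏ i, (B i).card ≤ (G.induce f hfinj).E.card := by
      refine orbit_count J B hBdisj _ ?_
      intro π hπ a haB
      show a ∈ Finset.univ.filter (fun a : Fin r → Fin l => (fun i => f (a i)) ∈ G.E)
      rw [Finset.mem_filter]
      refine ⟨Finset.mem_univ _, ?_⟩
      set b : Fin r → Fin n := fun i => f (a (π⁻¹ i)) with hb
      have hbE : b ∈ G.E := by
        refine hS2 b fun i => ?_
        rw [hb]
        have h1 := haB (π⁻¹ i)
        rw [hB, Finset.mem_filter] at h1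
        have h2 : f (a (π⁻¹ i)) ∈ A (π (π⁻¹ i)) := h1.2
        rw [show π (π⁻¹ i) = i from by simp] at h2
        exact hAsub i h2
      have hclosed := G.closed b hbE π hπ
      have heq : (fun i => b (π i)) = (fun i => f (a i)) := by
        funext i
        rw [hb]
        simp
      rwa [heq] at hclosed
    -- Step 8: final density computation
    refine ⟨f, hfinj, ?_⟩
    set Pr : ℕ := ∏ i ∈ Finset.range r, (if i < l % r then l / r + 1 else l / r) with hPr
    have hprod : ∏ i, (B i).card = Pr := by
      rw [Finset.prod_congr rfl (fun i _ => (hBcard i).trans rfl)]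
      simp only [hti, hPr]
      exact Fin.prod_univ_eq_prod_range (fun j => if j < l % r then l / r + 1 else l / r) r
    have hdescP : l.descFactorial r ≤ r ^ r * Pr := by
      have h1 := balanced l r hrpos
      have h2 : ∏ i ∈ Finset.range r, (r * (if i < l % r then l / r + 1 else l / r))
          = r ^ r * Pr := by
        rw [Finset.prod_mul_distrib, Finset.prod_const, Finset.card_range, hPr]
      rw [← h2]
      exact h1
    have hcount2 : (Nat.card J : ℝ) * (Pr : ℝ) ≤ ((G.induce f hfinj).E.card : ℝ) := by
      have := hcount
      rw [hprod] at this
      exact_mod_cast this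
    have hPrdens : ((l.descFactorial r : ℕ) : ℝ) / (r:ℝ)^r ≤ (Pr : ℝ) := by
      rw [div_le_iff₀ hrr]
      have : ((l.descFactorial r : ℕ) : ℝ) ≤ ((r ^ r * Pr : ℕ) : ℝ) := by exact_mod_cast hdescP
      push_cast at this
      linarith
    have hedge : (Pr : ℝ) ≤ (G.induce f hfinj).edgeCount := by
      unfold GDH.edgeCount
      rw [le_div_iff₀ hm]
      linarith [hcount2]
    have hdenomval : β * GDH.denom r J l = ((l.descFactorial r : ℕ) : ℝ) / (r:ℝ)^r :=
      denomval r l J hm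
    have hdenompos : 0 ≤ GDH.denom r J l := by
      unfold GDH.denom
      positivity
    have hab : α + (β - α)/2 ≤ β := by linarith
    calc (α + (β - α)/2) * GDH.denom r J l
        ≤ β * GDH.denom r J l := mul_le_mul_of_nonneg_right hab hdenompos
      _ = ((l.descFactorial r : ℕ) : ℝ) / (r:ℝ)^r := hdenomval
      _ ≤ (Pr : ℝ) := hPrdens
      _ ≤ (G.induce f hfinj).edgeCount := hedge
end

section
/- A real number α ∈ [0,1) is a jump for type J if and only if there exists some c > 0 such that for every family 𝓕 of GDHs of type J, either π(𝓕) ≤ α or π(𝓕) ≥ α + c. -/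
open Finset Filter

section Aux

open GDH

variable {r : ℕ} {J : Subgroup (Equiv.Perm (Fin r))}

lemma aux_m_pos : 0 < (Nat.card J : ℝ) := by
  have : 0 < Nat.card J := Nat.card_pos
  exact_mod_cast this

lemma aux_edge_nonneg {n : ℕ} (G : GDH r J (Fin n)) : 0 ≤ G.edgeCount := by
  have := aux_m_pos (J := J)
  unfold GDH.edgeCount
  positivity

lemma aux_edge_le {n : ℕ} (G : GDH r J (Fin n)) : G.edgeCount ≤ ((n : ℝ)) ^ r := by
  unfold GDH.edgeCount
  have h1 : (G.E.card : ℝ) ≤ ((n : ℝ)) ^ r := by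
    have h := Finset.card_le_univ G.E
    have h2 : (Finset.univ : Finset (Fin r → Fin n)).card = n ^ r := by
      simp [Finset.card_univ, Fintype.card_fun]
    calc (G.E.card : ℝ) ≤ ((Finset.univ : Finset (Fin r → Fin n)).card : ℝ) := by
          exact_mod_cast h
      _ = ((n : ℝ)) ^ r := by rw [h2]; push_cast; ring
  have hm : (1 : ℝ) ≤ (Nat.card J : ℝ) := by
    have : 1 ≤ Nat.card J := Nat.card_pos
    exact_mod_cast this
  calc (G.E.card : ℝ) / (Nat.card J : ℝ) ≤ (G.E.card : ℝ) :=
        div_le_self (by positivity) hm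
    _ ≤ _ := h1

lemma aux_bdd {n : ℕ} {𝓕 : Set ((k : ℕ) × GDH r J (Fin k))} :
    BddAbove {x : ℝ | ∃ G : GDH r J (Fin n), G.Free 𝓕 ∧ x = G.edgeCount} := by
  refine ⟨((n : ℝ)) ^ r, ?_⟩
  rintro x ⟨G, -, rfl⟩
  exact aux_edge_le G

lemma aux_le_exNum {n : ℕ} {𝓕 : Set ((k : ℕ) × GDH r J (Fin k))} {G : GDH r J (Fin n)}
    (hG : G.Free 𝓕) : G.edgeCount ≤ exNum r J n 𝓕 :=
  le_csSup aux_bdd ⟨G, hG, rfl⟩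

lemma aux_exNum_nonneg {n : ℕ} {𝓕 : Set ((k : ℕ) × GDH r J (Fin k))} :
    0 ≤ exNum r J n 𝓕 := by
  rcases Set.eq_empty_or_nonempty
      {x : ℝ | ∃ G : GDH r J (Fin n), G.Free 𝓕 ∧ x = G.edgeCount} with h | ⟨x, hx⟩
  · unfold GDH.exNum
    rw [h, Real.sSup_empty]
  · obtain ⟨G, hG, rfl⟩ := hx
    exact (aux_edge_nonneg G).trans (aux_le_exNum hG)

lemma aux_exNum_le {n : ℕ} {𝓕 : Set ((k : ℕ) × GDH r J (Fin k))} {B : ℝ} (hB : 0 ≤ B)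
    (h : ∀ G : GDH r J (Fin n), G.Free 𝓕 → G.edgeCount ≤ B) : exNum r J n 𝓕 ≤ B := by
  rcases Set.eq_empty_or_nonempty
      {x : ℝ | ∃ G : GDH r J (Fin n), G.Free 𝓕 ∧ x = G.edgeCount} with he | hne
  · unfold GDH.exNum
    rw [he, Real.sSup_empty]; exact hB
  · refine csSup_le hne ?_
    rintro x ⟨G, hG, rfl⟩
    exact h G hG

lemma aux_denom_nonneg {n : ℕ} : 0 ≤ denom r J n := by
  unfold GDH.denom
  positivity

lemma aux_denom_pos {n : ℕ} (h : r ≤ n) : 0 < denom r J n := by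
  unfold GDH.denom
  have h1 : 0 < (r.factorial : ℝ) := by exact_mod_cast r.factorial_pos
  have h2 := aux_m_pos (J := J)
  have h3 : 0 < (n.choose r : ℝ) := by exact_mod_cast Nat.choose_pos h
  positivity

lemma aux_densitySeq_nonneg {n : ℕ} {𝓕 : Set ((k : ℕ) × GDH r J (Fin k))} :
    0 ≤ densitySeq r J 𝓕 n :=
  div_nonneg aux_exNum_nonneg aux_denom_nonneg

lemma aux_free_induce {n l : ℕ} {𝓕 : Set ((k : ℕ) × GDH r J (Fin k))}
    {G : GDH r J (Fin n)} (hG : G.Free 𝓕) (f : Fin l → Fin n) (hf : Function.Injective f) :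
    (G.induce f hf).Free 𝓕 := by
  intro F hF hcopy
  obtain ⟨g, hg, hmap⟩ := hcopy
  refine hG F hF ⟨fun w => f (g w), hf.comp hg, fun a ha => ?_⟩
  have h1 := hmap a ha
  simp only [GDH.induce, Finset.mem_filter] at h1
  exact h1.2

lemma aux_induce_card {n : ℕ} (hn : 1 ≤ n) (G : GDH r J (Fin (n + 1))) (v : Fin (n + 1)) :
    (G.induce v.succAbove Fin.succAbove_right_injective).E.card
      = (G.E.filter (fun a => ∀ i, a i ≠ v)).card := by
  haveI : Nonempty (Fin n) := ⟨⟨0, hn⟩⟩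
  have key : ∀ x : Fin (n + 1), x ≠ v →
      v.succAbove (Function.invFun v.succAbove x) = x := by
    intro x hx
    obtain ⟨z, hz⟩ := Fin.exists_succAbove_eq hx
    exact Function.invFun_eq ⟨z, hz⟩
  refine Finset.card_bij' (fun b _ => fun i => v.succAbove (b i))
    (fun a _ => fun i => Function.invFun v.succAbove (a i)) ?_ ?_ ?_ ?_
  · intro b hb
    simp only [GDH.induce, Finset.mem_filter] at hb
    exact Finset.mem_filter.mpr ⟨hb.2, fun i => Fin.succAbove_ne v (b i)⟩
  · intro a ha
    rw [Finset.mem_filter] at ha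
    simp only [GDH.induce, Finset.mem_filter]
    refine ⟨Finset.mem_univ _, ?_⟩
    have heq : (fun i => v.succAbove (Function.invFun v.succAbove (a i))) = a :=
      funext fun i => key (a i) (ha.2 i)
    rw [heq]; exact ha.1
  · intro b hb
    funext i
    exact Function.leftInverse_invFun Fin.succAbove_right_injective (b i)
  · intro a ha
    rw [Finset.mem_filter] at ha
    funext i
    exact key (a i) (ha.2 i)

lemma aux_sum_induce {n : ℕ} (hr : 1 ≤ r) (hn : r ≤ n) (G : GDH r J (Fin (n + 1))) :
    ∑ v : Fin (n + 1), (G.induce v.succAbove Fin.succAbove_right_injective).E.card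
      = (n + 1 - r) * G.E.card := by
  have h1 : 1 ≤ n := hr.trans hn
  calc ∑ v : Fin (n + 1), (G.induce v.succAbove Fin.succAbove_right_injective).E.card
      = ∑ v : Fin (n + 1), (G.E.filter (fun a => ∀ i, a i ≠ v)).card :=
        Finset.sum_congr rfl fun v _ => aux_induce_card h1 G v
    _ = ∑ v : Fin (n + 1), ∑ a ∈ G.E, if (∀ i, a i ≠ v) then 1 else 0 :=
        Finset.sum_congr rfl fun v _ => Finset.card_filter _ _
    _ = ∑ a ∈ G.E, ∑ v : Fin (n + 1), if (∀ i, a i ≠ v) then 1 else 0 := Finset.sum_comm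
    _ = ∑ a ∈ G.E, ((Finset.univ : Finset (Fin (n+1))).filter
          (fun v => ∀ i, a i ≠ v)).card :=
        Finset.sum_congr rfl fun a _ => (Finset.card_filter _ _).symm
    _ = ∑ _a ∈ G.E, (n + 1 - r) := by
        refine Finset.sum_congr rfl fun a ha => ?_
        have himg : ((Finset.univ : Finset (Fin (n+1))).filter
            (fun v => ¬ ∀ i, a i ≠ v)) = Finset.image a Finset.univ := by
          ext v
          simp [not_forall, eq_comm]
        have hcard : (Finset.image a Finset.univ).card = r := by
          rw [Finset.card_image_of_injective _ (G.inj a ha)]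
          simp
        have hsum := Finset.card_filter_add_card_filter_not
          (s := (Finset.univ : Finset (Fin (n+1)))) (fun v => ∀ i, a i ≠ v)
        rw [himg, hcard, Finset.card_univ, Fintype.card_fin] at hsum
        omega
    _ = (n + 1 - r) * G.E.card := by
        rw [Finset.sum_const, smul_eq_mul, Nat.mul_comm]

lemma aux_choose_id {n : ℕ} : (n + 1 - r) * ((n+1).choose r) = (n + 1) * n.choose r := by
  calc (n + 1 - r) * (n+1).choose r = (n+1).choose r * (n + 1 - r) := Nat.mul_comm _ _
    _ = (n+1).choose (r+1) * (r+1) := (Nat.choose_succ_right_eq (n+1) r).symm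
    _ = (n + 1) * n.choose r := (Nat.add_one_mul_choose_eq n r).symm

lemma aux_denom_id {n : ℕ} (hn : r ≤ n) :
    ((n : ℝ) + 1 - r) * denom r J (n+1) = ((n : ℝ) + 1) * denom r J n := by
  have h := aux_choose_id (r := r) (n := n)
  have hc : ((n + 1 - r : ℕ) : ℝ) = (n : ℝ) + 1 - r := by
    rw [Nat.cast_sub (by omega)]
    push_cast; ring
  have hcast : ((n : ℝ) + 1 - r) * ((n+1).choose r : ℝ) = ((n : ℝ) + 1) * (n.choose r : ℝ) := by
    rw [← hc]
    exact_mod_cast congrArg (fun k : ℕ => (k : ℝ)) h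
  unfold GDH.denom
  calc ((n : ℝ) + 1 - r) * (((r.factorial : ℝ) / (Nat.card J)) * ((n+1).choose r))
      = ((r.factorial : ℝ) / (Nat.card J)) * (((n : ℝ) + 1 - r) * ((n+1).choose r)) := by ring
    _ = ((r.factorial : ℝ) / (Nat.card J)) * (((n : ℝ) + 1) * (n.choose r : ℝ)) := by
        rw [hcast]
    _ = ((n : ℝ) + 1) * (((r.factorial : ℝ) / (Nat.card J)) * (n.choose r)) := by ring

lemma aux_antitone_step {n : ℕ} (hr : 1 ≤ r) (hn : r ≤ n)
    (𝓕 : Set ((k : ℕ) × GDH r J (Fin k))) :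
    densitySeq r J 𝓕 (n+1) ≤ densitySeq r J 𝓕 n := by
  have hd0 : 0 < denom r J n := aux_denom_pos hn
  have hd1 : 0 < denom r J (n+1) := aux_denom_pos (hn.trans (Nat.le_succ n))
  have hrn : (r : ℝ) ≤ (n : ℝ) := by exact_mod_cast hn
  have hpos : (0 : ℝ) < (n : ℝ) + 1 - r := by linarith
  have key : ∀ G : GDH r J (Fin (n+1)), G.Free 𝓕 →
      G.edgeCount ≤ densitySeq r J 𝓕 n * denom r J (n+1) := by
    intro G hG
    have hsum : ((n : ℝ) + 1 - r) * G.edgeCount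
        = ∑ v : Fin (n+1), (G.induce v.succAbove Fin.succAbove_right_injective).edgeCount := by
      have hnat := aux_sum_induce hr hn G
      have hcastsum : (∑ v : Fin (n+1),
          ((G.induce v.succAbove Fin.succAbove_right_injective).E.card : ℝ))
          = ((n : ℝ) + 1 - r) * (G.E.card : ℝ) := by
        have := congrArg (fun k : ℕ => (k : ℝ)) hnat
        push_cast at this
        rw [this]
        rw [Nat.cast_sub (by omega)]
        push_cast; ring
      unfold GDH.edgeCount
      rw [← Finset.sum_div, hcastsum]
      ring
    have hbound : (∑ v : Fin (n+1),
        (G.induce v.succAbove Fin.succAbove_right_injective).edgeCount)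
        ≤ ((n : ℝ) + 1) * exNum r J n 𝓕 := by
      calc (∑ v : Fin (n+1),
            (G.induce v.succAbove Fin.succAbove_right_injective).edgeCount)
          ≤ ∑ _v : Fin (n+1), exNum r J n 𝓕 :=
            Finset.sum_le_sum fun v _ => aux_le_exNum (aux_free_induce hG _ _)
        _ = ((n : ℝ) + 1) * exNum r J n 𝓕 := by
            rw [Finset.sum_const, Finset.card_univ, Fintype.card_fin, nsmul_eq_mul]
            push_cast; ring
    have hrhs : ((n : ℝ) + 1 - r) * (densitySeq r J 𝓕 n * denom r J (n+1))
        = ((n : ℝ) + 1) * exNum r J n 𝓕 := by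
      unfold GDH.densitySeq
      have h2 := aux_denom_id (J := J) hn
      calc ((n : ℝ) + 1 - r) * (exNum r J n 𝓕 / denom r J n * denom r J (n+1))
          = (exNum r J n 𝓕 / denom r J n) * (((n : ℝ) + 1 - r) * denom r J (n+1)) := by ring
        _ = (exNum r J n 𝓕 / denom r J n) * (((n : ℝ) + 1) * denom r J n) := by rw [h2]
        _ = ((n : ℝ) + 1) * exNum r J n 𝓕 := by
            field_simp
    rw [← mul_le_mul_iff_right₀ hpos, hrhs, hsum]
    exact hbound
  have hnn : 0 ≤ densitySeq r J 𝓕 n * denom r J (n+1) :=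
    mul_nonneg aux_densitySeq_nonneg aux_denom_nonneg
  have := aux_exNum_le hnn key
  unfold GDH.densitySeq
  rw [div_le_iff₀ hd1]
  exact this

lemma aux_antitone {p n : ℕ} (hr : 1 ≤ r) (hp : r ≤ p) (hpn : p ≤ n)
    (𝓕 : Set ((k : ℕ) × GDH r J (Fin k))) :
    densitySeq r J 𝓕 n ≤ densitySeq r J 𝓕 p := by
  induction n, hpn using Nat.le_induction with
  | base => exact le_refl _
  | succ n hn ih =>
      exact (aux_antitone_step hr (hp.trans hn) 𝓕).trans ih

end Aux
/-- `α ∈ [0,1)` is a jump for type `J` iff there is `c > 0` such that for every family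
`𝓕` of GDHs of type `J`, either `π(𝓕) ≤ α` or `π(𝓕) ≥ α + c`. -/
theorem stmt9 (r : ℕ) (hr : 1 ≤ r) (J : Subgroup (Equiv.Perm (Fin r)))
    (α : ℝ) (h0 : 0 ≤ α) (h1 : α < 1) :
    GDH.IsJump r J α ↔
      ∃ c > (0 : ℝ), ∀ 𝓕 : Set ((k : ℕ) × GDH r J (Fin k)), ∀ π𝓕 : ℝ,
        GDH.IsTuranDensity r J 𝓕 π𝓕 → (π𝓕 ≤ α ∨ α + c ≤ π𝓕) := by
  
  constructor
  · rintro ⟨c, hc, hjump⟩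
    refine ⟨c, hc, ?_⟩
    intro 𝓕 πF hT
    by_cases hπ : πF ≤ α
    · exact Or.inl hπ
    · right
      have hα : α < πF := not_le.mp hπ
      have hε : 0 < (πF - α) / 2 := by linarith
      have hlt : α + (πF - α) / 2 < πF := by linarith
      have key : ∀ l : ℕ, r ≤ l → α + c ≤ GDH.densitySeq r J 𝓕 l := by
        intro l hl
        obtain ⟨n₀, hn₀⟩ := hjump _ hε l (lt_of_lt_of_le hr hl)
        have hev : ∀ᶠ n in atTop, α + (πF - α) / 2 < GDH.densitySeq r J 𝓕 n :=
          hT.eventually (eventually_gt_nhds hlt)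
        obtain ⟨N, hN⟩ := eventually_atTop.mp hev
        have hnl : l ≤ max (max n₀ N) l := le_max_right _ _
        set n := max (max n₀ N) l with hndef
        have hrn : r ≤ n := hl.trans hnl
        have hdn : 0 < GDH.denom r J n := aux_denom_pos hrn
        have hds : α + (πF - α) / 2 < GDH.densitySeq r J 𝓕 n :=
          hN n ((le_max_right n₀ N).trans (le_max_left _ _))
        unfold GDH.densitySeq at hds
        have hex : (α + (πF - α) / 2) * GDH.denom r J n < GDH.exNum r J n 𝓕 :=
          (lt_div_iff₀ hdn).mp hds
        have hG : ∃ G : GDH r J (Fin n), G.Free 𝓕 ∧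
            (α + (πF - α) / 2) * GDH.denom r J n ≤ G.edgeCount := by
          by_contra hcon
          push_neg at hcon
          have hb : GDH.exNum r J n 𝓕 ≤ (α + (πF - α) / 2) * GDH.denom r J n :=
            aux_exNum_le (mul_nonneg (by linarith) aux_denom_nonneg)
              (fun G hGf => le_of_lt (hcon G hGf))
          linarith
        obtain ⟨G, hGf, hGe⟩ := hG
        obtain ⟨f, hf, hind⟩ := hn₀ n ((le_max_left n₀ N).trans (le_max_left _ _)) G hGe
        have hfree := aux_free_induce hGf f hf
        have hle := aux_le_exNum hfree
        have hdl : 0 < GDH.denom r J l := aux_denom_pos hl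
        unfold GDH.densitySeq
        rw [le_div_iff₀ hdl]
        linarith
      exact ge_of_tendsto hT (eventually_atTop.mpr ⟨r, key⟩)
  · rintro ⟨c, hc, hgap⟩
    refine ⟨c / 2, by linarith, ?_⟩
    intro ε hε l hl
    by_cases hlr : l < r
    · refine ⟨l, fun n hn G hG => ⟨Fin.castLE hn, Fin.castLE_injective hn, ?_⟩⟩
      have hd : GDH.denom r J l = 0 := by
        unfold GDH.denom
        rw [Nat.choose_eq_zero_of_lt hlr]
        simp
      rw [hd, mul_zero]
      exact aux_edge_nonneg _
    · have hrl : r ≤ l := not_lt.mp hlr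
      set 𝓕 : Set ((k : ℕ) × GDH r J (Fin k)) :=
        {F | F.1 = l ∧ (α + c / 2) * GDH.denom r J l ≤ F.2.edgeCount} with h𝓕
      have hdl : 0 < GDH.denom r J l := aux_denom_pos hrl
      have hbase : GDH.densitySeq r J 𝓕 l ≤ α + c / 2 := by
        have hb : ∀ G : GDH r J (Fin l), G.Free 𝓕 →
            G.edgeCount ≤ (α + c / 2) * GDH.denom r J l := by
          intro G hGF
          by_contra hcon
          have hmem : (⟨l, G⟩ : (k : ℕ) × GDH r J (Fin k)) ∈ 𝓕 := by
            rw [h𝓕]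
            exact ⟨rfl, le_of_lt (not_le.mp hcon)⟩
          exact hGF ⟨l, G⟩ hmem ⟨id, Function.injective_id, fun a ha => by simpa using ha⟩
        have hex := aux_exNum_le (mul_nonneg (by linarith) aux_denom_nonneg) hb
        unfold GDH.densitySeq
        rw [div_le_iff₀ hdl]
        exact hex
      have hA : ∀ n, l ≤ n → GDH.densitySeq r J 𝓕 n ≤ α + c / 2 :=
        fun n hn => (aux_antitone hr hrl hn 𝓕).trans hbase
      have hganti : Antitone (fun k => GDH.densitySeq r J 𝓕 (k + l)) := by
        apply antitone_nat_of_succ_le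
        intro k
        have hkl : r ≤ k + l := hrl.trans (Nat.le_add_left l k)
        have hstep := aux_antitone_step (J := J) hr hkl 𝓕
        have heq : k + 1 + l = k + l + 1 := by omega
        simpa [heq] using hstep
      have hbdd : BddBelow (Set.range (fun k => GDH.densitySeq r J 𝓕 (k + l))) := by
        refine ⟨0, ?_⟩
        rintro x ⟨k, rfl⟩
        exact aux_densitySeq_nonneg
      have htg := tendsto_atTop_ciInf hganti hbdd
      set πF := ⨅ k, GDH.densitySeq r J 𝓕 (k + l) with hπF
      have hTur : GDH.IsTuranDensity r J 𝓕 πF :=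
        (Filter.tendsto_add_atTop_iff_nat l).mp htg
      have hπle : πF ≤ α + c / 2 := by
        have h0 := ciInf_le hbdd 0
        simp only [zero_add] at h0
        exact h0.trans hbase
      have hπα : πF ≤ α := by
        rcases hgap 𝓕 πF hTur with h | h
        · exact h
        · linarith
      have hev : ∀ᶠ n in atTop, GDH.densitySeq r J 𝓕 n < α + ε :=
        hTur.eventually (eventually_lt_nhds (by linarith))
      obtain ⟨N, hN⟩ := eventually_atTop.mp hev
      refine ⟨max N l, ?_⟩
      intro n hn G hGe
      have hnl : l ≤ n := le_trans (le_max_right N l) hn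
      have hrn : r ≤ n := hrl.trans hnl
      have hdn : 0 < GDH.denom r J n := aux_denom_pos hrn
      have hds : GDH.densitySeq r J 𝓕 n < α + ε := hN n (le_trans (le_max_left N l) hn)
      unfold GDH.densitySeq at hds
      have hnotfree : ¬ G.Free 𝓕 := by
        intro hfree
        have h1 := aux_le_exNum hfree
        have h2 : GDH.exNum r J n 𝓕 < (α + ε) * GDH.denom r J n := (div_lt_iff₀ hdn).mp hds
        linarith
      unfold GDH.Free at hnotfree
      push_neg at hnotfree
      obtain ⟨F, hFmem, hFcopy⟩ := hnotfree
      obtain ⟨k, H⟩ := F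
      rw [h𝓕] at hFmem
      obtain ⟨hk, hHe⟩ := hFmem
      simp only at hk
      subst hk
      obtain ⟨f, hf, hmap⟩ := hFcopy
      refine ⟨f, hf, ?_⟩
      refine le_trans hHe ?_
      have hsub : H.E ⊆ (G.induce f hf).E := by
        intro a ha
        simp only [GDH.induce, Finset.mem_filter]
        exact ⟨Finset.mem_univ _, hmap a ha⟩
      unfold GDH.edgeCount
      rw [div_eq_mul_inv, div_eq_mul_inv]
      refine mul_le_mul_of_nonneg_right ?_ (by positivity)
      exact_mod_cast Finset.card_le_card hsub
end

section
/- Let J' ⊆ J be subgroups of S_r. Then for any family 𝓕 of GDHs of type J there exists a family 𝓕' of GDHs of type J' with π_{J'}(𝓕') = π_J(𝓕); moreover, if 𝓕 is finite then 𝓕' can be taken to be finite. -/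
open Finset Filter

namespace GDHAux

open GDH

variable {r : ℕ} {J' J : Subgroup (Equiv.Perm (Fin r))} {V : Type} [DecidableEq V]

instance [Finite V] : Finite (GDH r J V) := by
  have : Fintype V := Fintype.ofFinite V
  exact Finite.of_injective (fun G : GDH r J V => G.E)
    (by intro a b h; cases a; cases b; simp_all)

/-- View a `J`-GDH as a `J'`-GDH. -/
def restrict (hJ : J' ≤ J) (H : GDH r J V) : GDH r J' V where
  E := H.E
  inj := H.inj
  closed := fun a ha π hπ => H.closed a ha π (hJ hπ)

open scoped Classical in
/-- The `J`-closure of a `J'`-GDH. -/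
noncomputable def closure [Fintype V] (_hJ : J' ≤ J) (G : GDH r J' V) : GDH r J V where
  E := Finset.univ.filter (fun a => ∃ π ∈ J, (fun i => a (π i)) ∈ G.E)
  inj := by
    intro a ha
    rw [Finset.mem_filter] at ha
    obtain ⟨π, _, h⟩ := ha.2
    have hinj := G.inj _ h
    intro i j hij
    have h2 : (fun k => a (π k)) (π.symm i) = (fun k => a (π k)) (π.symm j) := by
      simpa using hij
    have := hinj h2
    have := congrArg π this
    simpa using this
  closed := by
    intro a ha σ hσ
    rw [Finset.mem_filter] at ha ⊢
    obtain ⟨π, hπ, h⟩ := ha.2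
    refine ⟨Finset.mem_univ _, σ⁻¹ * π, mul_mem (inv_mem hσ) hπ, ?_⟩
    have : (fun i => a (σ ((σ⁻¹ * π) i))) = fun i => a (π i) := by
      funext i; simp [Equiv.Perm.mul_apply]
    exact this ▸ h

lemma subset_closure [Fintype V] (hJ : J' ≤ J) (G : GDH r J' V) :
    G.E ⊆ (closure hJ G).E := by
  classical
  intro a ha
  rw [closure, Finset.mem_filter]
  exact ⟨Finset.mem_univ _, 1, one_mem _, ha⟩

lemma containsCopy_of_restrict {n k : ℕ} (hJ : J' ≤ J) (H : GDH r J (Fin n))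
    (F : GDH r J (Fin k)) (F' : GDH r J' (Fin k)) (hmc : F.IsMinContainer F')
    (h : (restrict hJ H).ContainsCopy F') : H.ContainsCopy F := by
  obtain ⟨f, hf, hmap⟩ := h
  refine ⟨f, hf, ?_⟩
  intro b hb
  obtain ⟨a, ha, hsub⟩ := hmc.2 b hb
  have hmem : a ∈ GDH.orbitSet J b := by
    apply hsub
    exact ⟨1, one_mem _, by funext i; simp⟩
  obtain ⟨π, hπ, rfl⟩ := hmem
  have h1 : (fun i => f (b (π i))) ∈ H.E := hmap _ ha
  have h2 := H.closed _ h1 π⁻¹ (inv_mem hπ)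
  have h3 : (fun i => (fun j => f (b (π j))) (π⁻¹ i)) = fun i => f (b i) := by
    funext i; simp
  rwa [h3] at h2

lemma exists_minContainer_of_closure_copy {n k : ℕ} (hJ : J' ≤ J)
    (G : GDH r J' (Fin n)) (F : GDH r J (Fin k))
    (h : (closure hJ G).ContainsCopy F) :
    ∃ F' : GDH r J' (Fin k), F.IsMinContainer F' ∧ G.ContainsCopy F' := by
  classical
  obtain ⟨f, hf, hmap⟩ := h
  refine ⟨⟨F.E.filter (fun a => (fun i => f (a i)) ∈ G.E), ?_, ?_⟩, ⟨?_, ?_⟩, f, hf, ?_⟩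
  · intro a ha
    rw [Finset.mem_filter] at ha
    exact F.inj a ha.1
  · intro a ha σ hσ
    rw [Finset.mem_filter] at ha ⊢
    refine ⟨F.closed a ha.1 σ (hJ hσ), ?_⟩
    exact G.closed _ ha.2 σ hσ
  · -- Contains
    intro a ha
    rw [Finset.mem_filter] at ha
    refine ⟨a, ha.1, ?_⟩
    rintro x ⟨σ, hσ, rfl⟩
    exact ⟨σ, hJ hσ, rfl⟩
  · -- minimality
    intro b hb
    have h1 : (fun i => f (b i)) ∈ (closure hJ G).E := hmap b hb
    rw [closure, Finset.mem_filter] at h1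
    obtain ⟨_, π, hπ, h2⟩ := h1
    refine ⟨fun i => b (π i), ?_, ?_⟩
    · rw [Finset.mem_filter]
      exact ⟨F.closed b hb π hπ, h2⟩
    · rintro x ⟨σ, hσ, rfl⟩
      exact ⟨π * σ, mul_mem hπ (hJ hσ), by funext i; simp [Equiv.Perm.mul_apply]⟩
  · intro a ha
    rw [Finset.mem_filter] at ha
    exact ha.2

end GDHAux

/-- Let `J' ⊆ J` be subgroups of `S_r`. For any family `𝓕` of GDHs of type `J` there is
a family `𝓕'` of GDHs of type `J'` with `π_{J'}(𝓕') = π_J(𝓕)`; moreover if `𝓕` is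
finite then `𝓕'` can be taken finite. -/
theorem stmt10 (r : ℕ) (hr : 1 ≤ r) (J' J : Subgroup (Equiv.Perm (Fin r))) (hJ : J' ≤ J)
    (𝓕 : Set ((k : ℕ) × GDH r J (Fin k))) (x : ℝ)
    (hπ : GDH.IsTuranDensity r J 𝓕 x) :
    ∃ 𝓕' : Set ((k : ℕ) × GDH r J' (Fin k)),
      GDH.IsTuranDensity r J' 𝓕' x ∧ (𝓕.Finite → 𝓕'.Finite) := by
  classical
  set 𝓕' : Set ((k : ℕ) × GDH r J' (Fin k)) :=
    ⋃ q ∈ 𝓕, (fun F' => (⟨q.1, F'⟩ : (k : ℕ) × GDH r J' (Fin k))) ''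
      {F' | q.2.IsMinContainer F'} with h𝓕'
  have hm : (0 : ℝ) < Nat.card J := by
    exact_mod_cast Nat.card_pos
  have hm' : (0 : ℝ) < Nat.card J' := by
    exact_mod_cast Nat.card_pos
  refine ⟨𝓕', ?_, ?_⟩
  · -- same density sequence
    have hrestr_free : ∀ n : ℕ, ∀ H : GDH r J (Fin n), H.Free 𝓕 →
        (GDHAux.restrict hJ H).Free 𝓕' := by
      intro n H hH p hp hcopy
      simp only [h𝓕', Set.mem_iUnion, Set.mem_image] at hp
      obtain ⟨q, hq, F', hmc, rfl⟩ := hp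
      exact hH q hq (GDHAux.containsCopy_of_restrict hJ H q.2 F' hmc hcopy)
    have hclos_free : ∀ n : ℕ, ∀ G : GDH r J' (Fin n), G.Free 𝓕' →
        (GDHAux.closure hJ G).Free 𝓕 := by
      intro n G hG q hq hcopy
      obtain ⟨F', hmc, hcopy'⟩ := GDHAux.exists_minContainer_of_closure_copy hJ G q.2 hcopy
      refine hG ⟨q.1, F'⟩ ?_ hcopy'
      simp only [h𝓕', Set.mem_iUnion, Set.mem_image]
      exact ⟨q, hq, F', hmc, rfl⟩
    have hseq : GDH.densitySeq r J' 𝓕' = GDH.densitySeq r J 𝓕 := by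
      funext n
      set A : Set ℝ :=
        {x : ℝ | ∃ G : GDH r J' (Fin n), G.Free 𝓕' ∧ x = G.edgeCount} with hA
      set B : Set ℝ :=
        {x : ℝ | ∃ G : GDH r J (Fin n), G.Free 𝓕 ∧ x = G.edgeCount} with hB
      have hAfin : A.Finite := by
        apply Set.Finite.subset (Set.finite_range (GDH.edgeCount (V := Fin n) (K := J')))
        rintro y ⟨G, _, rfl⟩; exact ⟨G, rfl⟩
      have hBfin : B.Finite := by
        apply Set.Finite.subset (Set.finite_range (GDH.edgeCount (V := Fin n) (K := J)))
        rintro y ⟨G, _, rfl⟩; exact ⟨G, rfl⟩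
      have hseq' : GDH.densitySeq r J' 𝓕' n = sSup A / GDH.denom r J' n := rfl
      have hseq'' : GDH.densitySeq r J 𝓕 n = sSup B / GDH.denom r J n := rfl
      by_cases hAne : A.Nonempty
      · obtain ⟨a, ha⟩ := hAne
        have haA : sSup A ∈ A := (Set.nonempty_of_mem ha).csSup_mem hAfin
        obtain ⟨G, hGfree, hGa⟩ := haA
        have hBne : B.Nonempty :=
          ⟨(GDHAux.closure hJ G).edgeCount, GDHAux.closure hJ G, hclos_free n G hGfree, rfl⟩
        have hbB : sSup B ∈ B := hBne.csSup_mem hBfin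
        obtain ⟨H, hHfree, hHb⟩ := hbB
        -- sSup B ≥ edgeCount of closure G
        have h1 : (GDHAux.closure hJ G).edgeCount ≤ sSup B :=
          le_csSup hBfin.bddAbove ⟨GDHAux.closure hJ G, hclos_free n G hGfree, rfl⟩
        have h2 : (GDHAux.restrict hJ H).edgeCount ≤ sSup A :=
          le_csSup hAfin.bddAbove ⟨GDHAux.restrict hJ H, hrestr_free n H hHfree, rfl⟩
        have hcard : (G.E.card : ℝ) ≤ ((GDHAux.closure hJ G).E.card : ℝ) := by
          exact_mod_cast Finset.card_le_card (GDHAux.subset_closure hJ G)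
        have hGE : sSup A * Nat.card J' = (G.E.card : ℝ) := by
          rw [hGa, GDH.edgeCount, div_mul_cancel₀ _ hm'.ne']
        have hHE : sSup B * Nat.card J = (H.E.card : ℝ) := by
          rw [hHb, GDH.edgeCount, div_mul_cancel₀ _ hm.ne']
        have key : sSup A * Nat.card J' = sSup B * Nat.card J := by
          have le1 : sSup A * Nat.card J' ≤ sSup B * Nat.card J := by
            rw [hGE]
            calc (G.E.card : ℝ) ≤ ((GDHAux.closure hJ G).E.card : ℝ) := hcard
              _ = (GDHAux.closure hJ G).edgeCount * Nat.card J := by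
                  rw [GDH.edgeCount, div_mul_cancel₀ _ hm.ne']
              _ ≤ sSup B * Nat.card J := by
                  exact mul_le_mul_of_nonneg_right h1 hm.le
          have le2 : sSup B * Nat.card J ≤ sSup A * Nat.card J' := by
            rw [hHE]
            have hre : (H.E.card : ℝ) = (GDHAux.restrict hJ H).edgeCount * Nat.card J' := by
              rw [GDH.edgeCount, GDHAux.restrict, div_mul_cancel₀ _ hm'.ne']
            rw [hre]
            exact mul_le_mul_of_nonneg_right h2 hm'.le
          linarith
        rw [hseq', hseq'', GDH.denom, GDH.denom]
        by_cases hC : ((n.choose r : ℝ)) = 0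
        · simp [hC]
        · have hfac : ((r.factorial : ℝ)) ≠ 0 := by
            exact_mod_cast r.factorial_ne_zero
          have e1 : sSup A / ((r.factorial : ℝ) / (Nat.card J') * (n.choose r))
              = (sSup A * Nat.card J') / ((r.factorial : ℝ) * (n.choose r)) := by
            field_simp
          have e2 : sSup B / ((r.factorial : ℝ) / (Nat.card J) * (n.choose r))
              = (sSup B * Nat.card J) / ((r.factorial : ℝ) * (n.choose r)) := by
            field_simp
          rw [e1, e2, key]
      · have hBne : ¬ B.Nonempty := by
          rintro ⟨b, H, hHfree, rfl⟩
          exact hAne ⟨(GDHAux.restrict hJ H).edgeCount,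
            GDHAux.restrict hJ H, hrestr_free n H hHfree, rfl⟩
        rw [Set.not_nonempty_iff_eq_empty] at hAne hBne
        rw [hseq', hseq'', hAne, hBne, Real.sSup_empty, zero_div, zero_div]
    rw [GDH.IsTuranDensity, hseq]
    exact hπ
  · intro hfin
    exact hfin.biUnion (fun q _ => (Set.toFinite _).image _)
end

section
/- Let J' ⊆ J be subgroups of S_r. If α ∈ [0,1) is a jump for type J', then α is also a jump for type J. -/
open Finset Filter

/-- Jumps pass up the lattice: if `J' ⊆ J` and `α ∈ [0,1)` is a jump for type `J'`,
then `α` is a jump for type `J`. -/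
theorem stmt11 (r : ℕ) (hr : 1 ≤ r) (J' J : Subgroup (Equiv.Perm (Fin r))) (hJ : J' ≤ J)
    (α : ℝ) (h0 : 0 ≤ α) (h1 : α < 1) (h : GDH.IsJump r J' α) :
    GDH.IsJump r J α := by
  have key : ∀ (K : Subgroup (Equiv.Perm (Fin r))) (m : ℕ) (x : ℝ)
      (S : Finset (Fin r → Fin m)),
      (x * GDH.denom r K m ≤ (S.card : ℝ) / (Nat.card K) ↔
        x * ((r.factorial : ℝ) * (m.choose r)) ≤ (S.card : ℝ)) := by
    intro K m x S
    have hK : (0 : ℝ) < (Nat.card K : ℝ) := by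
      exact_mod_cast Nat.card_pos
    rw [GDH.denom, div_mul_eq_mul_div, mul_div_assoc']
    rw [div_le_div_iff_of_pos_right hK]
  obtain ⟨c, hc, hjump⟩ := h
  refine ⟨c, hc, ?_⟩
  intro ε hε l hl
  obtain ⟨n₀, hn₀⟩ := hjump ε hε l hl
  refine ⟨n₀, fun n hn G hG => ?_⟩
  let G' : GDH r J' (Fin n) := ⟨G.E, G.inj, fun a ha π hπ => G.closed a ha π (hJ hπ)⟩
  have hG' : (α + ε) * GDH.denom r J' n ≤ G'.edgeCount := by
    rw [GDH.edgeCount, key]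
    rw [GDH.edgeCount, key] at hG
    exact hG
  obtain ⟨f, hf, hind⟩ := hn₀ n hn G' hG'
  refine ⟨f, hf, ?_⟩
  rw [GDH.edgeCount, key] at hind ⊢
  exact hind
end

section
/- Every demonstrated nonjump for type J in [0,1) is a nonjump for type J, i.e., if α ∈ [0,1) is a demonstrated nonjump for type J then α is not a jump for type J. -/
open Finset Filter

namespace GDH

variable {r : ℕ} {K : Subgroup (Equiv.Perm (Fin r))} {U V : Type} [DecidableEq U] [DecidableEq V]

lemma natCard_pos : (0 : ℝ) < Nat.card K := by exact_mod_cast Nat.card_pos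

/-- The pullback of a GDH along an arbitrary (not necessarily injective) vertex map. -/
def pull [Fintype U] (G : GDH r K V) (φ : U → V) : GDH r K U where
  E := Finset.univ.filter (fun a : Fin r → U => (fun i => φ (a i)) ∈ G.E)
  inj := by
    intro a ha
    rw [Finset.mem_filter] at ha
    exact fun i j hij => G.inj _ ha.2 (congrArg φ hij)
  closed := by
    intro a ha π hπ
    rw [Finset.mem_filter] at ha ⊢
    exact ⟨Finset.mem_univ _, G.closed _ ha.2 π hπ⟩

lemma induce_E [Fintype U] (G : GDH r K V) (f : U → V) (hf : Function.Injective f) :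
    (G.induce f hf).E = (G.pull f).E := rfl

lemma pull_pull {W : Type} [DecidableEq W] [Fintype U] [Fintype W] (G : GDH r K V)
    (φ : U → V) (ψ : W → U) : ((G.pull φ).pull ψ).E = (G.pull (fun w => φ (ψ w))).E := by
  ext a
  simp only [pull, Finset.mem_filter, Finset.mem_univ, true_and]

lemma sum_pull [Fintype U] (G : GDH r K V) (φ : U → V) (x : U → ℝ) :
    ∑ a ∈ (G.pull φ).E, ∏ i, x (a i)
      = ∑ b ∈ G.E, ∏ i, ∑ u ∈ Finset.univ.filter (fun u => φ u = b i), x u := by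
  calc ∑ a ∈ (G.pull φ).E, ∏ i, x (a i)
      = ∑ b ∈ G.E, ∑ a ∈ (G.pull φ).E.filter (fun a => (fun i => φ (a i)) = b),
          ∏ i, x (a i) :=
        (Finset.sum_fiberwise_of_maps_to
          (fun a ha => (Finset.mem_filter.mp ha).2) _).symm
    _ = ∑ b ∈ G.E, ∏ i, ∑ u ∈ Finset.univ.filter (fun u => φ u = b i), x u := by
        refine Finset.sum_congr rfl fun b hb => ?_
        rw [Finset.prod_univ_sum]
        refine Finset.sum_congr ?_ fun _ _ => rfl
        ext a
        simp only [Finset.mem_filter, Fintype.mem_piFinset, Finset.mem_univ, true_and,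
          funext_iff]
        constructor
        · rintro ⟨-, h2⟩; exact h2
        · intro h2
          have hab : (fun i => φ (a i)) = b := funext h2
          refine ⟨Finset.mem_filter.mpr ⟨Finset.mem_univ _, ?_⟩, h2⟩
          rw [hab]; exact hb

lemma edgePoly_pull [Fintype U] (G : GDH r K V) (φ : U → V) (x : U → ℝ) :
    (G.pull φ).edgePoly x
      = G.edgePoly (fun v => ∑ u ∈ Finset.univ.filter (fun u => φ u = v), x u) := by
  unfold edgePoly
  rw [sum_pull]

lemma edgePoly_congr {G₁ G₂ : GDH r K V} (h : G₁.E = G₂.E) : G₁.edgePoly = G₂.edgePoly := by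
  unfold edgePoly
  rw [h]

lemma edgePoly_continuous [Fintype V] (G : GDH r K V) : Continuous G.edgePoly := by
  unfold edgePoly
  refine Continuous.div_const ?_ _
  refine continuous_finset_sum _ fun a _ => continuous_finset_prod _ fun i _ => ?_
  exact continuous_apply (a i)

lemma me_sum (G : GDH r K V) (x : V → ℝ) :
    (Nat.card K : ℝ) * G.edgePoly x = ∑ a ∈ G.E, ∏ i, x (a i) := by
  have hm : (Nat.card K : ℝ) ≠ 0 := (natCard_pos (K := K)).ne'
  unfold edgePoly
  rw [← mul_div_assoc, mul_div_cancel_left₀ _ hm]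

lemma me_uniform {n : ℕ} (G : GDH r K (Fin n)) :
    (Nat.card K : ℝ) * G.edgePoly (fun _ => ((n : ℝ))⁻¹)
      = (G.E.card : ℝ) * (((n : ℝ))⁻¹) ^ r := by
  rw [me_sum]
  simp [Finset.prod_const, Finset.card_univ, Finset.sum_const, nsmul_eq_mul]

lemma le_blowupDensity' [Fintype V] (G : GDH r K V) {x : V → ℝ} (hx : x ∈ stdSimplex ℝ V) :
    (Nat.card K : ℝ) * G.edgePoly x ≤ G.blowupDensity :=
  mul_le_mul_of_nonneg_left
    (le_csSup (((isCompact_stdSimplex ℝ V).image G.edgePoly_continuous).bddAbove)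
      ⟨x, hx, rfl⟩) (Nat.cast_nonneg _)

lemma blowupDensity_le' [Fintype V] (G : GDH r K V) {β : ℝ} (hβ : 0 ≤ β)
    (h : ∀ x ∈ stdSimplex ℝ V, (Nat.card K : ℝ) * G.edgePoly x ≤ β) :
    G.blowupDensity ≤ β := by
  have hm : (0 : ℝ) < Nat.card K := natCard_pos
  have hsup : sSup (G.edgePoly '' stdSimplex ℝ V) ≤ β / Nat.card K := by
    refine Real.sSup_le ?_ (by positivity)
    rintro y ⟨x, hx, rfl⟩
    rw [le_div_iff₀ hm]
    have := h x hx
    linarith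
  calc G.blowupDensity ≤ (Nat.card K : ℝ) * (β / Nat.card K) :=
        mul_le_mul_of_nonneg_left hsup (Nat.cast_nonneg _)
    _ = β := by field_simp

lemma uniform_mem (n : ℕ) (hn : 0 < n) :
    (fun _ : Fin n => ((n : ℝ))⁻¹) ∈ stdSimplex ℝ (Fin n) := by
  constructor
  · intro _; positivity
  · have : ((n : ℝ)) ≠ 0 := Nat.cast_ne_zero.mpr hn.ne'
    simp [Finset.sum_const, Finset.card_univ, nsmul_eq_mul, mul_inv_cancel₀ this]

/-- The fiber of the first projection of a sigma type. -/
def fiberEquiv {V : Type} (t : V → ℕ) (v : V) :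
    {s : (v' : V) × Fin (t v') // s.1 = v} ≃ Fin (t v) where
  toFun s := Fin.cast (congrArg t s.2) s.1.2
  invFun x := ⟨⟨v, x⟩, rfl⟩
  left_inv := by rintro ⟨⟨v', x⟩, rfl⟩; rfl
  right_inv x := rfl

lemma exists_coloring {V : Type} [DecidableEq V] [Fintype V] (t : V → ℕ) :
    ∃ c : Fin (∑ v, t v) → V,
      ∀ v, (Finset.univ.filter (fun j => c j = v)).card = t v := by
  have hcard : Fintype.card ((v : V) × Fin (t v)) = ∑ v, t v := by
    simp [Fintype.card_sigma]
  refine ⟨fun j => ((Fintype.equivFinOfCardEq hcard).symm j).1, fun v => ?_⟩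
  rw [← Fintype.card_subtype]
  rw [Fintype.card_congr
    (((Fintype.equivFinOfCardEq hcard).symm.subtypeEquiv (fun j => Iff.rfl)) :
      {j // ((Fintype.equivFinOfCardEq hcard).symm j).1 = v}
        ≃ {s : (v' : V) × Fin (t v') // s.1 = v})]
  rw [Fintype.card_congr (fiberEquiv t v)]
  exact Fintype.card_fin _

lemma denom_mul (n : ℕ) :
    (Nat.card K : ℝ) * denom r K n = (r.factorial : ℝ) * (n.choose r) := by
  have hm : (Nat.card K : ℝ) ≠ 0 := (natCard_pos (K := K)).ne'
  unfold denom
  field_simp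

lemma denom_le (n : ℕ) : (Nat.card K : ℝ) * denom r K n ≤ ((n : ℝ)) ^ r := by
  rw [denom_mul]
  calc (r.factorial : ℝ) * (n.choose r) = ((n.descFactorial r : ℕ) : ℝ) := by
        rw [Nat.descFactorial_eq_factorial_mul_choose]; push_cast; ring
    _ ≤ ((n : ℝ)) ^ r := by exact_mod_cast Nat.descFactorial_le_pow n r

lemma descFactorial_lower {l : ℕ} (hrl : r ≤ l) :
    ((l : ℝ) - r) ^ r ≤ (r.factorial : ℝ) * (l.choose r) := by
  have h1 : (l - r) ^ r ≤ l.descFactorial r :=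
    le_trans (Nat.pow_le_pow_left (by omega) r) (Nat.pow_sub_le_descFactorial l r)
  calc ((l : ℝ) - r) ^ r = (((l - r : ℕ)) : ℝ) ^ r := by rw [Nat.cast_sub hrl]
    _ ≤ ((l.descFactorial r : ℕ) : ℝ) := by exact_mod_cast h1
    _ = (r.factorial : ℝ) * (l.choose r) := by
        rw [Nat.descFactorial_eq_factorial_mul_choose]; push_cast; ring

end GDH

/-- Every demonstrated nonjump in `[0,1)` for type `J` is a nonjump for type `J`. -/
theorem stmt12 (r : ℕ) (hr : 1 ≤ r) (J : Subgroup (Equiv.Perm (Fin r)))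
    (α : ℝ) (h0 : 0 ≤ α) (h1 : α < 1) (h : GDH.IsDemoNonjump r J α) :
    ¬ GDH.IsJump r J α := by
  rintro ⟨c, hc, hjump⟩
  obtain ⟨G, hb, hind⟩ := h
  have hm0 : (0 : ℝ) < Nat.card J := GDH.natCard_pos
  -- Step 1 : choose l such that α < (α+c)(1 - r/l)^r, r ≤ l, 0 < l
  obtain ⟨l, hl0, hrl, hlgap⟩ :
      ∃ l : ℕ, 0 < l ∧ r ≤ l ∧ α < (α + c) * (1 - (r : ℝ) / l) ^ r := by
    have h1' : Filter.Tendsto (fun l : ℕ => (α + c) * (1 - (r : ℝ) / l) ^ r) atTop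
        (nhds ((α + c) * (1 - 0) ^ r)) := by
      refine Filter.Tendsto.const_mul _ (Filter.Tendsto.pow ?_ r)
      exact tendsto_const_nhds.sub (tendsto_const_div_atTop_nhds_zero_nat (r : ℝ))
    have h2' : (α + c) * ((1 : ℝ) - 0) ^ r = α + c := by norm_num
    rw [h2'] at h1'
    have h3' := h1'.eventually (eventually_gt_nhds (lt_add_of_pos_right α hc))
    obtain ⟨l, hgap, hge⟩ := (h3'.and (Filter.eventually_ge_atTop (max r 1))).exists
    exact ⟨l, (le_max_right r 1).trans hge, (le_max_left r 1).trans hge, hgap⟩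
  -- Step 2 : apply the demonstrated nonjump at l, take n := n₀
  obtain ⟨n₀, hnd⟩ := hind l hl0
  set k := (G n₀).1 with hk
  set Gn := (G n₀).2 with hGn
  -- choose a near-optimal weighting x
  obtain ⟨x, hx, hpx⟩ :
      ∃ x ∈ stdSimplex ℝ (Fin k), α < (Nat.card J : ℝ) * Gn.edgePoly x := by
    by_contra hcon
    push_neg at hcon
    exact absurd (hb n₀) (not_lt.mpr (Gn.blowupDensity_le' h0 hcon))
  set ε : ℝ := ((Nat.card J : ℝ) * Gn.edgePoly x - α) / 2 with hεdef
  have hε0 : 0 < ε := by rw [hεdef]; linarith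
  obtain ⟨N₀, hjN⟩ := hjump ε hε0 l hl0
  -- the blowup weights
  have htv : ∀ v : Fin k, Filter.Tendsto
      (fun M : ℕ => ((⌊x v * (M : ℝ)⌋₊ : ℕ) : ℝ) / (M : ℝ)) atTop (nhds (x v)) := by
    intro v
    exact (tendsto_nat_floor_mul_div_atTop (hx.1 v)).comp tendsto_natCast_atTop_atTop
  have hNt : Filter.Tendsto
      (fun M : ℕ => (((∑ v, ⌊x v * (M : ℝ)⌋₊ : ℕ)) : ℝ) / (M : ℝ)) atTop (nhds 1) := by
    have hsum := tendsto_finset_sum (Finset.univ : Finset (Fin k))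
      (fun v _ => htv v)
    rw [hx.2] at hsum
    refine hsum.congr fun M => ?_
    push_cast
    rw [Finset.sum_div]
  have hu : Filter.Tendsto
      (fun M : ℕ => fun v : Fin k =>
        ((⌊x v * (M : ℝ)⌋₊ : ℕ) : ℝ) / (((∑ w, ⌊x w * (M : ℝ)⌋₊ : ℕ)) : ℝ))
      atTop (nhds x) := by
    rw [tendsto_pi_nhds]
    intro v
    have hdiv := (htv v).div hNt one_ne_zero
    rw [div_one] at hdiv
    refine hdiv.congr' ?_
    filter_upwards [Filter.eventually_ge_atTop 1] with M hM
    have hM0 : (M : ℝ) ≠ 0 := Nat.cast_ne_zero.mpr (by omega)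
    show ((((⌊x v * (M : ℝ)⌋₊ : ℕ)) : ℝ) / (M : ℝ))
        / ((((∑ w, ⌊x w * (M : ℝ)⌋₊ : ℕ)) : ℝ) / (M : ℝ))
      = (((⌊x v * (M : ℝ)⌋₊ : ℕ)) : ℝ) / (((∑ w, ⌊x w * (M : ℝ)⌋₊ : ℕ)) : ℝ)
    rw [div_div_div_comm, div_self hM0, div_one]
  have hcomp : Filter.Tendsto
      (fun M : ℕ => (Nat.card J : ℝ) * Gn.edgePoly (fun v =>
        ((⌊x v * (M : ℝ)⌋₊ : ℕ) : ℝ) / (((∑ w, ⌊x w * (M : ℝ)⌋₊ : ℕ)) : ℝ)))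
      atTop (nhds ((Nat.card J : ℝ) * Gn.edgePoly x)) :=
    (Gn.edgePoly_continuous.continuousAt.tendsto.comp hu).const_mul _
  have hEv1 := hcomp.eventually (eventually_gt_nhds
    (show α + ε < (Nat.card J : ℝ) * Gn.edgePoly x by rw [hεdef]; linarith))
  have hEv2 := hNt.eventually (eventually_gt_nhds (show (1 : ℝ) / 2 < 1 by norm_num))
  obtain ⟨M, ⟨hM1, hM2⟩, hM3⟩ :=
    ((hEv1.and hEv2).and (Filter.eventually_ge_atTop (2 * N₀ + 2))).exists
  set t : Fin k → ℕ := fun v => ⌊x v * (M : ℝ)⌋₊ with htdef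
  set N : ℕ := ∑ v, t v with hNdef
  -- N is large
  have hNge : N₀ + 1 ≤ N := by
    have hMR : ((2 * N₀ + 2 : ℕ) : ℝ) ≤ (M : ℝ) := Nat.cast_le.mpr hM3
    have hMpos : (0 : ℝ) < (M : ℝ) := by push_cast at hMR ⊢; linarith
    have hNR : (M : ℝ) / 2 < (N : ℝ) := by
      have h' := mul_lt_mul_of_pos_right hM2 hMpos
      rw [div_mul_cancel₀ _ hMpos.ne'] at h'
      linarith
    have : ((N₀ + 1 : ℕ) : ℝ) < (N : ℝ) := by push_cast at hMR hNR ⊢; linarith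
    exact_mod_cast this.le
  have hN0 : 0 < N := by omega
  have hN0R : (0 : ℝ) < (N : ℝ) := Nat.cast_pos.mpr hN0
  -- the blowup
  obtain ⟨cmap, hcmap⟩ := GDH.exists_coloring t
  set B : GDH r J (Fin N) := Gn.pull cmap with hB
  -- edge count of the blowup
  have hBpoly : (Nat.card J : ℝ) * B.edgePoly (fun _ => ((N : ℝ))⁻¹)
      = (Nat.card J : ℝ) * Gn.edgePoly (fun v => ((t v : ℕ) : ℝ) / (N : ℝ)) := by
    rw [hB, GDH.edgePoly_pull]
    congr 2
    funext v
    rw [Finset.sum_const, hcmap v, nsmul_eq_mul, div_eq_mul_inv]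
  have hBgood : α + ε < (Nat.card J : ℝ) * B.edgePoly (fun _ => ((N : ℝ))⁻¹) := by
    rw [hBpoly]; exact hM1
  have hBcard : (α + ε) * (N : ℝ) ^ r ≤ (B.E.card : ℝ) := by
    have h2' := GDH.me_uniform B
    rw [h2'] at hBgood
    have hPr : (0 : ℝ) < (N : ℝ) ^ r := by positivity
    have h3' := mul_lt_mul_of_pos_right hBgood hPr
    have h4' : (B.E.card : ℝ) * (((N : ℝ))⁻¹) ^ r * (N : ℝ) ^ r = (B.E.card : ℝ) := by
      rw [mul_assoc, ← mul_pow, inv_mul_cancel₀ hN0R.ne', one_pow, mul_one]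
    rw [h4'] at h3'
    exact h3'.le
  have hBcount : (α + ε) * GDH.denom r J N ≤ B.edgeCount := by
    unfold GDH.edgeCount
    rw [le_div_iff₀ hm0]
    calc (α + ε) * GDH.denom r J N * (Nat.card J : ℝ)
        = (α + ε) * ((Nat.card J : ℝ) * GDH.denom r J N) := by ring
      _ ≤ (α + ε) * (N : ℝ) ^ r :=
          mul_le_mul_of_nonneg_left (GDH.denom_le N) (by linarith)
      _ ≤ (B.E.card : ℝ) := hBcard
  -- apply the jump
  obtain ⟨f, hf, hH⟩ := hjN N (by omega) B hBcount
  set H : GDH r J (Fin l) := B.induce f hf with hHdef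
  -- lower bound : α < blowupDensity H
  have hlow : α < H.blowupDensity := by
    have hcardH : (α + c) * ((r.factorial : ℝ) * (l.choose r)) ≤ (H.E.card : ℝ) := by
      have hEC : (α + c) * GDH.denom r J l ≤ (H.E.card : ℝ) / (Nat.card J : ℝ) := hH
      rw [le_div_iff₀ hm0] at hEC
      calc (α + c) * ((r.factorial : ℝ) * (l.choose r))
          = (α + c) * ((Nat.card J : ℝ) * GDH.denom r J l) := by rw [GDH.denom_mul]
        _ = (α + c) * GDH.denom r J l * (Nat.card J : ℝ) := by ring
        _ ≤ (H.E.card : ℝ) := hEC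
    have hlpos : (0 : ℝ) < (l : ℝ) := Nat.cast_pos.mpr hl0
    have hlr : (0 : ℝ) < (l : ℝ) ^ r := by positivity
    have hk2 : (α + c) * (1 - (r : ℝ) / l) ^ r * (l : ℝ) ^ r
        = (α + c) * ((l : ℝ) - r) ^ r := by
      rw [mul_assoc, ← mul_pow]
      congr 2
      field_simp
    have hchain : α < (Nat.card J : ℝ) * H.edgePoly (fun _ => ((l : ℝ))⁻¹) := by
      rw [GDH.me_uniform]
      calc α < (α + c) * (1 - (r : ℝ) / l) ^ r := hlgap
        _ = (α + c) * ((l : ℝ) - r) ^ r / (l : ℝ) ^ r := by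
            rw [← hk2, mul_div_cancel_right₀ _ hlr.ne']
        _ ≤ (H.E.card : ℝ) / (l : ℝ) ^ r := by
            have hnum : (α + c) * ((l : ℝ) - r) ^ r ≤ (H.E.card : ℝ) :=
              le_trans (mul_le_mul_of_nonneg_left
                (GDH.descFactorial_lower hrl) (by linarith)) hcardH
            gcongr
        _ = (H.E.card : ℝ) * (((l : ℝ))⁻¹) ^ r := by
            rw [div_eq_mul_inv, inv_pow]
    exact lt_of_lt_of_le hchain (H.le_blowupDensity' (GDH.uniform_mem l hl0))
  -- upper bound : blowupDensity H ≤ α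
  have hup : H.blowupDensity ≤ α := by
    set φ : Fin l → Fin k := fun j => cmap (f j) with hφdef
    set T : Finset (Fin k) := Finset.image φ Finset.univ with hT
    have hsl : T.card ≤ l := by
      calc T.card ≤ (Finset.univ : Finset (Fin l)).card := Finset.card_image_le
        _ = l := by simp
    set g' := T.orderIsoOfFin rfl with hg'
    set g : Fin T.card → Fin k := fun j => (g' j : Fin k) with hgdef
    have hg : Function.Injective g := fun a b hab => g'.injective (Subtype.ext hab)
    set ψ : Fin l → Fin T.card := fun u =>
      g'.symm ⟨φ u, Finset.mem_image_of_mem φ (Finset.mem_univ u)⟩ with hψdef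
    have hgψ : ∀ u, g (ψ u) = φ u := fun u =>
      congrArg Subtype.val (g'.apply_symm_apply _)
    have hEident : H.E = ((Gn.induce g hg).pull ψ).E := by
      calc H.E = ((Gn.pull cmap).pull f).E := rfl
        _ = (Gn.pull (fun j => cmap (f j))).E := GDH.pull_pull Gn cmap f
        _ = (Gn.pull (fun u => g (ψ u))).E := by
            rw [show (fun j => cmap (f j)) = (fun u => g (ψ u)) from
              funext fun u => (hgψ u).symm]
        _ = ((Gn.pull g).pull ψ).E := (GDH.pull_pull Gn g ψ).symm
        _ = ((Gn.induce g hg).pull ψ).E := rfl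
    refine H.blowupDensity_le' h0 fun y hy => ?_
    have hpoly : H.edgePoly y = (Gn.induce g hg).edgePoly
        (fun v => ∑ u ∈ Finset.univ.filter (fun u => ψ u = v), y u) := by
      have e1 : H.edgePoly = ((Gn.induce g hg).pull ψ).edgePoly :=
        GDH.edgePoly_congr hEident
      rw [e1, GDH.edgePoly_pull]
    have hz : (fun v => ∑ u ∈ Finset.univ.filter (fun u => ψ u = v), y u)
        ∈ stdSimplex ℝ (Fin T.card) := by
      constructor
      · intro v
        exact Finset.sum_nonneg fun u _ => hy.1 u
      · rw [Finset.sum_fiberwise Finset.univ ψ y]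
        exact hy.2
    calc (Nat.card J : ℝ) * H.edgePoly y
        = (Nat.card J : ℝ) * (Gn.induce g hg).edgePoly
            (fun v => ∑ u ∈ Finset.univ.filter (fun u => ψ u = v), y u) := by rw [hpoly]
      _ ≤ (Gn.induce g hg).blowupDensity := (Gn.induce g hg).le_blowupDensity' hz
      _ ≤ α := hnd n₀ le_rfl T.card hsl g hg
  exact absurd hlow (not_lt.mpr hup)
end

section
/- Let J' ⊆ J be subgroups of S_r with m = |J| and m' = |J'|, and let α be a demonstrated nonjump for type J. Then for every integer k with 1 ≤ k ≤ m/m', the number (k·m'/m)·α is a demonstrated nonjump for type J'. -/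
open Finset Filter

namespace GDHAux

open GDH
open scoped Classical Pointwise

variable {r : ℕ} {J' J : Subgroup (Equiv.Perm (Fin r))} {V : Type}

/-- The orbit equivalence relation of the action of `J` on tuples. -/
def orbSetoid (J : Subgroup (Equiv.Perm (Fin r))) (V : Type) : Setoid (Fin r → V) where
  r a b := ∃ π ∈ J, b = fun i => a (π i)
  iseqv := by
    constructor
    · intro a; exact ⟨1, one_mem J, by simp⟩
    · rintro a b ⟨π, hπ, rfl⟩
      exact ⟨π⁻¹, inv_mem hπ, by funext i; simp⟩
    · rintro a b c ⟨π, hπ, rfl⟩ ⟨σ, hσ, rfl⟩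
      exact ⟨π * σ, mul_mem hπ hσ, by funext i; simp [Equiv.Perm.mul_apply]⟩

/-- Canonical representative of the `J`-orbit of a tuple. -/
noncomputable def rep (J : Subgroup (Equiv.Perm (Fin r))) (a : Fin r → V) : Fin r → V :=
  Quotient.out (Quotient.mk (orbSetoid J V) a)

lemma rep_rel (J : Subgroup (Equiv.Perm (Fin r))) (a : Fin r → V) :
    ∃ π ∈ J, a = fun i => rep J a (π i) :=
  Quotient.exact (Quotient.out_eq (Quotient.mk (orbSetoid J V) a))

/-- The permutation carrying the orbit representative of `a` to `a`. -/
noncomputable def psi (J : Subgroup (Equiv.Perm (Fin r))) (a : Fin r → V) :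
    Equiv.Perm (Fin r) :=
  (rep_rel J a).choose

lemma psi_mem (J : Subgroup (Equiv.Perm (Fin r))) (a : Fin r → V) : psi J a ∈ J :=
  (rep_rel J a).choose_spec.1

lemma rep_psi (J : Subgroup (Equiv.Perm (Fin r))) (a : Fin r → V) :
    a = fun i => rep J a (psi J a i) :=
  (rep_rel J a).choose_spec.2

lemma rep_eq {a b : Fin r → V} (h : ∃ π ∈ J, b = fun i => a (π i)) :
    rep J b = rep J a :=
  (congrArg Quotient.out (@Quotient.sound _ (orbSetoid J V) a b h)).symm

lemma rep_inj {a : Fin r → V} (ha : Function.Injective a) :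
    Function.Injective (rep J a) := by
  intro u v huv
  have h1 : ∀ j, rep J a j = a ((psi J a).symm j) := by
    intro j
    have := congrFun (rep_psi J a) ((psi J a).symm j)
    simpa using this.symm
  rw [h1 u, h1 v] at huv
  exact (psi J a).symm.injective (ha huv)

lemma psi_mul {a : Fin r → V} (ha : Function.Injective a) {π : Equiv.Perm (Fin r)}
    (hπ : π ∈ J) : psi J (fun i => a (π i)) = psi J a * π := by
  set b := fun i => a (π i) with hb
  have hrep : rep J b = rep J a := rep_eq ⟨π, hπ, rfl⟩
  have h1 : ∀ i, b i = rep J a (psi J b i) := by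
    intro i
    have := congrFun (rep_psi J b) i
    rw [hrep] at this; exact this
  have h2 : ∀ i, b i = rep J a ((psi J a * π) i) := by
    intro i
    have := congrFun (rep_psi J a) (π i)
    simpa [Equiv.Perm.mul_apply] using this
  refine Equiv.coe_fn_injective (funext fun i => ?_)
  exact rep_inj ha ((h1 i).symm.trans (h2 i))

/-- Key counting identity: a `ψ`-equivariant filter keeps exactly a `|T|/|J|` fraction
of every weighted sum with permutation-invariant weights. -/
lemma key_count (J : Subgroup (Equiv.Perm (Fin r))) (A : Finset (Fin r → V))
    (hcl : ∀ a ∈ A, ∀ π ∈ J, (fun i => a (π i)) ∈ A)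
    (χ : (Fin r → V) → Equiv.Perm (Fin r))
    (hχmul : ∀ a ∈ A, ∀ π ∈ J, χ (fun i => a (π i)) = χ a * π)
    (hχJ : ∀ a ∈ A, χ a ∈ J)
    (T : Finset (Equiv.Perm (Fin r))) (hT : ∀ g ∈ T, g ∈ J)
    (x : V → ℝ) :
    (Nat.card J : ℝ) * ∑ a ∈ A.filter (fun a => χ a ∈ T), ∏ i, x (a i)
      = (T.card : ℝ) * ∑ a ∈ A, ∏ i, x (a i) := by
  set Jf : Finset (Equiv.Perm (Fin r)) := Finset.univ.filter (fun g => g ∈ J) with hJf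
  have hJfcard : Jf.card = Nat.card J := by
    rw [Nat.card_eq_fintype_card, Fintype.card_subtype]
  have step1 : ∀ π ∈ Jf, ∑ a ∈ A.filter (fun a => χ a ∈ T), ∏ i, x (a i)
      = ∑ a ∈ A.filter (fun a => χ a * π ∈ T), ∏ i, x (a i) := by
    intro π hπ
    have hπJ : π ∈ J := (Finset.mem_filter.1 hπ).2
    refine Finset.sum_nbij' (fun a => fun j => a (π⁻¹ j)) (fun a => fun j => a (π j))
      ?_ ?_ ?_ ?_ ?_
    · intro a ha
      rw [Finset.mem_filter] at ha ⊢
      have hmem := hcl a ha.1 π⁻¹ (inv_mem hπJ)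
      refine ⟨hmem, ?_⟩
      rw [hχmul a ha.1 π⁻¹ (inv_mem hπJ)]
      simpa using ha.2
    · intro a ha
      rw [Finset.mem_filter] at ha ⊢
      have hmem := hcl a ha.1 π hπJ
      refine ⟨hmem, ?_⟩
      rw [hχmul a ha.1 π hπJ]
      exact ha.2
    · intro a _; funext j; simp
    · intro a _; funext j; simp
    · intro a _
      exact (Equiv.prod_comp π⁻¹ (fun j => x (a j))).symm
  calc (Nat.card J : ℝ) * ∑ a ∈ A.filter (fun a => χ a ∈ T), ∏ i, x (a i)
      = ∑ _π ∈ Jf, ∑ a ∈ A.filter (fun a => χ a ∈ T), ∏ i, x (a i) := by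
        rw [Finset.sum_const, hJfcard, nsmul_eq_mul]
    _ = ∑ π ∈ Jf, ∑ a ∈ A.filter (fun a => χ a * π ∈ T), ∏ i, x (a i) :=
        Finset.sum_congr rfl step1
    _ = ∑ π ∈ Jf, ∑ a ∈ A, if χ a * π ∈ T then ∏ i, x (a i) else 0 :=
        Finset.sum_congr rfl (fun π _ => (Finset.sum_filter _ _))
    _ = ∑ a ∈ A, ∑ π ∈ Jf, if χ a * π ∈ T then ∏ i, x (a i) else 0 := Finset.sum_comm
    _ = ∑ a ∈ A, (T.card : ℝ) * ∏ i, x (a i) := by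
        refine Finset.sum_congr rfl (fun a ha => ?_)
        rw [← Finset.sum_filter]
        have himg : Jf.filter (fun π => χ a * π ∈ T)
            = T.image (fun t => (χ a)⁻¹ * t) := by
          ext π
          simp only [Finset.mem_filter, Finset.mem_image, hJf, Finset.mem_univ, true_and]
          constructor
          · rintro ⟨hπJ2, hπT⟩
            exact ⟨χ a * π, hπT, by group⟩
          · rintro ⟨t, ht, rfl⟩
            refine ⟨mul_mem (inv_mem (hχJ a ha)) (hT t ht), ?_⟩
            simpa using ht
        rw [Finset.sum_const, himg,
          Finset.card_image_of_injective _ (mul_right_injective _), nsmul_eq_mul]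
    _ = (T.card : ℝ) * ∑ a ∈ A, ∏ i, x (a i) := by rw [Finset.mul_sum]

lemma natCard_pos (J : Subgroup (Equiv.Perm (Fin r))) : 0 < Nat.card J :=
  Nat.card_pos

/-- If `H'.E` is a `ψ`-equivariant filter of `H.E`, the blowup density scales by
`|T|/|J|`. -/
lemma blowup_filter {W : Type} [DecidableEq W] [Fintype W]
    (H : GDH r J W) (H' : GDH r J' W)
    (χ : (Fin r → W) → Equiv.Perm (Fin r))
    (hχmul : ∀ a ∈ H.E, ∀ π ∈ J, χ (fun i => a (π i)) = χ a * π)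
    (hχJ : ∀ a ∈ H.E, χ a ∈ J)
    (T : Finset (Equiv.Perm (Fin r))) (hT : ∀ g ∈ T, g ∈ J)
    (hE : H'.E = H.E.filter (fun a => χ a ∈ T)) :
    GDH.blowupDensity H' = ((T.card : ℝ) / (Nat.card J : ℝ)) * GDH.blowupDensity H := by
  have hm : (0 : ℝ) < (Nat.card J : ℝ) := by exact_mod_cast natCard_pos J
  have hm' : (0 : ℝ) < (Nat.card J' : ℝ) := by exact_mod_cast natCard_pos J'
  set c0 : ℝ := (T.card : ℝ) / (Nat.card J' : ℝ) with hc0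
  have hpoly : ∀ x : W → ℝ, GDH.edgePoly H' x = c0 * GDH.edgePoly H x := by
    intro x
    have hkc := key_count J H.E H.closed χ hχmul hχJ T hT x
    unfold GDH.edgePoly
    rw [hE]
    have h2 : ∑ a ∈ H.E.filter (fun a => χ a ∈ T), ∏ i, x (a i)
        = (T.card : ℝ) * (∑ a ∈ H.E, ∏ i, x (a i)) / (Nat.card J : ℝ) := by
      rw [eq_div_iff hm.ne']
      linarith [hkc]
    rw [h2, hc0]
    ring
  have himage : GDH.edgePoly H' '' stdSimplex ℝ W
      = c0 • (GDH.edgePoly H '' stdSimplex ℝ W) := by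
    rw [← Set.image_smul, Set.image_image]
    exact Set.image_congr fun x _ => by rw [hpoly, smul_eq_mul]
  unfold GDH.blowupDensity
  rw [himage, Real.sSup_smul_of_nonneg (by positivity), smul_eq_mul]
  set S := sSup (GDH.edgePoly H '' stdSimplex ℝ W)
  calc (Nat.card J' : ℝ) * (c0 * S) = c0 * (Nat.card J' : ℝ) * S := by ring
    _ = (T.card : ℝ) * S := by rw [hc0, div_mul_cancel₀ _ hm'.ne']
    _ = ((T.card : ℝ) / (Nat.card J : ℝ) * (Nat.card J : ℝ)) * S := by
        rw [div_mul_cancel₀ _ hm.ne']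
    _ = (T.card : ℝ) / (Nat.card J : ℝ) * ((Nat.card J : ℝ) * S) := by ring

/-- Existence of a union of `k` left cosets of `J'` inside `J`. -/
lemma exists_T (hJ : J' ≤ J) (k : ℕ) (hk : k * Nat.card J' ≤ Nat.card J) :
    ∃ T : Finset (Equiv.Perm (Fin r)), (∀ g ∈ T, g ∈ J) ∧ T.card = k * Nat.card J' ∧
      ∀ g ∈ T, ∀ τ ∈ J', g * τ ∈ T := by
  induction k with
  | zero => exact ⟨∅, by simp, by simp, by simp⟩
  | succ k ih =>
    obtain ⟨T, hT1, hT2, hT3⟩ := ih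
      (le_trans (Nat.mul_le_mul_right _ (Nat.le_succ k)) hk)
    set Jf : Finset (Equiv.Perm (Fin r)) := Finset.univ.filter (fun g => g ∈ J) with hJf
    set J'f : Finset (Equiv.Perm (Fin r)) := Finset.univ.filter (fun g => g ∈ J') with hJ'f
    have hJfcard : Jf.card = Nat.card J := by
      rw [Nat.card_eq_fintype_card, Fintype.card_subtype]
    have hJ'fcard : J'f.card = Nat.card J' := by
      rw [Nat.card_eq_fintype_card, Fintype.card_subtype]
    have hm' : 0 < Nat.card J' := natCard_pos J'
    have hlt : T.card < Jf.card := by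
      rw [hJfcard, hT2]
      calc k * Nat.card J' < k * Nat.card J' + Nat.card J' := by omega
        _ = (k + 1) * Nat.card J' := by ring
        _ ≤ Nat.card J := hk
    have hsub : T ⊆ Jf := fun g hg => by
      simp only [hJf, Finset.mem_filter, Finset.mem_univ, true_and]; exact hT1 g hg
    obtain ⟨g, hgJf, hgT⟩ := Finset.exists_of_ssubset
      (Finset.ssubset_iff_subset_ne.2 ⟨hsub, fun he => absurd (he ▸ hlt) (lt_irrefl _)⟩)
    have hgJ : g ∈ J := (Finset.mem_filter.1 (hJf ▸ hgJf)).2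
    refine ⟨T ∪ J'f.image (fun τ => g * τ), ?_, ?_, ?_⟩
    · intro x hx
      rcases Finset.mem_union.1 hx with hx | hx
      · exact hT1 x hx
      · obtain ⟨τ, hτ, rfl⟩ := Finset.mem_image.1 hx
        have hτJ' : τ ∈ J' := by simpa [hJ'f] using hτ
        exact mul_mem hgJ (hJ hτJ')
    · have hdisj : Disjoint T (J'f.image (fun τ => g * τ)) := by
        rw [Finset.disjoint_right]
        intro x hx hxT
        obtain ⟨τ, hτ, rfl⟩ := Finset.mem_image.1 hx
        have hτJ' : τ ∈ J' := by simpa [hJ'f] using hτ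
        have : g * τ * τ⁻¹ ∈ T := hT3 _ hxT τ⁻¹ (inv_mem hτJ')
        simp only [mul_inv_cancel_right] at this
        exact hgT this
      rw [Finset.card_union_of_disjoint hdisj, hT2,
        Finset.card_image_of_injective _ (mul_right_injective g), hJ'fcard]
      ring
    · intro x hx τ hτ
      rcases Finset.mem_union.1 hx with hx | hx
      · exact Finset.mem_union_left _ (hT3 x hx τ hτ)
      · obtain ⟨σ, hσ, rfl⟩ := Finset.mem_image.1 hx
        have hσJ' : σ ∈ J' := by simpa [hJ'f] using hσ
        refine Finset.mem_union_right _ (Finset.mem_image.2 ⟨σ * τ, ?_, by group⟩)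
        simp only [hJ'f, Finset.mem_filter, Finset.mem_univ, true_and]
        exact mul_mem hσJ' hτ

/-- The type-`J'` GDH obtained from a type-`J` GDH by keeping only tuples whose
`ψ`-value lies in `T`. -/
noncomputable def filtered [DecidableEq V] (H : GDH r J V) (hJ : J' ≤ J)
    (T : Finset (Equiv.Perm (Fin r)))
    (hT3 : ∀ g ∈ T, ∀ τ ∈ J', g * τ ∈ T) : GDH r J' V where
  E := H.E.filter (fun a => psi J a ∈ T)
  inj := fun a ha => H.inj a (Finset.mem_filter.1 ha).1
  closed := by
    intro a ha π hπ
    rw [Finset.mem_filter] at ha ⊢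
    refine ⟨H.closed a ha.1 π (hJ hπ), ?_⟩
    rw [psi_mul (H.inj a ha.1) (hJ hπ)]
    exact hT3 _ ha.2 π hπ

lemma filtered_density [DecidableEq V] [Fintype V] (H : GDH r J V) (hJ : J' ≤ J)
    (T : Finset (Equiv.Perm (Fin r))) (hT1 : ∀ g ∈ T, g ∈ J)
    (hT3 : ∀ g ∈ T, ∀ τ ∈ J', g * τ ∈ T) :
    GDH.blowupDensity (filtered H hJ T hT3)
      = ((T.card : ℝ) / (Nat.card J : ℝ)) * GDH.blowupDensity H :=
  blowup_filter H (filtered H hJ T hT3) (psi J)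
    (fun a ha π hπ => psi_mul (H.inj a ha) hπ) (fun a _ => psi_mem J a) T hT1 rfl

lemma filtered_induce_density [DecidableEq V] {s : ℕ} (H : GDH r J V) (hJ : J' ≤ J)
    (T : Finset (Equiv.Perm (Fin r))) (hT1 : ∀ g ∈ T, g ∈ J)
    (hT3 : ∀ g ∈ T, ∀ τ ∈ J', g * τ ∈ T) (f : Fin s → V) (hf : Function.Injective f) :
    GDH.blowupDensity ((filtered H hJ T hT3).induce f hf)
      = ((T.card : ℝ) / (Nat.card J : ℝ)) * GDH.blowupDensity (H.induce f hf) := by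
  refine blowup_filter (H.induce f hf) ((filtered H hJ T hT3).induce f hf)
    (fun a => psi J (fun i => f (a i))) ?_ ?_ T hT1 ?_
  · intro a ha π hπ
    have hmem : (fun i => f (a i)) ∈ H.E := (Finset.mem_filter.1 ha).2
    exact psi_mul (H.inj _ hmem) hπ
  · intro a _
    exact psi_mem J _
  · ext a
    simp only [GDH.induce, filtered, Finset.mem_filter, Finset.mem_univ, true_and]

end GDHAux
/-- Demonstrated nonjumps pass down the lattice: if `J' ⊆ J`, `α` is a demonstrated
nonjump for type `J`, and `1 ≤ k ≤ m/m'`, then `(k·m'/m)·α` is a demonstrated nonjump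
for type `J'`. -/
theorem stmt13 (r : ℕ) (hr : 1 ≤ r) (J' J : Subgroup (Equiv.Perm (Fin r))) (hJ : J' ≤ J)
    (α : ℝ) (h : GDH.IsDemoNonjump r J α)
    (k : ℕ) (hk1 : 1 ≤ k) (hk2 : k ≤ Nat.card J / Nat.card J') :
    GDH.IsDemoNonjump r J'
      ((((k : ℝ) * (Nat.card J' : ℝ)) / (Nat.card J : ℝ)) * α) := by
  classical
  obtain ⟨G, hG1, hG2⟩ := h
  have hm' : 0 < Nat.card J' := GDHAux.natCard_pos J'
  have hm : 0 < Nat.card J := GDHAux.natCard_pos J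
  have hkm : k * Nat.card J' ≤ Nat.card J := (Nat.le_div_iff_mul_le hm').1 hk2
  obtain ⟨T, hT1, hT2, hT3⟩ := GDHAux.exists_T hJ k hkm
  have hcast : ((T.card : ℕ) : ℝ) = (k : ℝ) * (Nat.card J' : ℝ) := by
    rw [hT2]; push_cast; ring
  have hk0 : (0 : ℝ) < (k : ℝ) := by exact_mod_cast hk1
  have hm'R : (0 : ℝ) < (Nat.card J' : ℝ) := by exact_mod_cast hm'
  have hmR : (0 : ℝ) < (Nat.card J : ℝ) := by exact_mod_cast hm
  have hcpos : 0 < ((k : ℝ) * (Nat.card J' : ℝ)) / (Nat.card J : ℝ) :=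
    div_pos (mul_pos hk0 hm'R) hmR
  refine ⟨fun n => ⟨(G n).1, GDHAux.filtered (G n).2 hJ T hT3⟩, ?_, ?_⟩
  · intro n
    have hd := GDHAux.filtered_density (G n).2 hJ T hT1 hT3
    rw [hcast] at hd
    rw [hd]
    exact mul_lt_mul_of_pos_left (hG1 n) hcpos
  · intro l hl
    obtain ⟨n₀, hn₀⟩ := hG2 l hl
    refine ⟨n₀, fun n hn s hs f hf => ?_⟩
    have hd := GDHAux.filtered_induce_density (G n).2 hJ T hT1 hT3 f hf
    rw [hcast] at hd
    rw [hd]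
    exact mul_le_mul_of_nonneg_left (hn₀ n hn s hs f hf) (le_of_lt hcpos)
end
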